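/- arXiv:2102.04541 — 13 statements merged into one kernel-verified Lean document; each statement's English description precedes it below -/
import Mathlib

section
/- A real nonnegative terraced matrix is positive semidefinite. -/
open Matrix

/-- The finset of positive entries of a matrix. -/
private noncomputable def posvals {V : Type*} [Fintype V] (C : Matrix V V ℝ) : Finset ℝ :=
  (Finset.univ.image fun p : V × V => C p.1 p.2).filter (fun r => 0 < r)

private lemma mem_posvals {V : Type*} [Fintype V] {C : Matrix V V ℝ} {v w : V}
    (h : 0 < C v w) : C v w ∈ posvals C := by
  rw [posvals, Finset.mem_filter, Finset.mem_image]
  exact ⟨⟨(v, w), Finset.mem_univ _, rfl⟩, h⟩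

/-- key positivity of the indicator quadratic form of a single superlevel set -/
private lemma sumA {V : Type*} [Fintype V] (x : V → ℝ) (C : Matrix V V ℝ) (ℓ : ℝ)
    (T : Set (Set V)) (hT : T.PairwiseDisjoint id)
    (hS : {p : V × V | ℓ ≤ C p.1 p.2} = ⋃ X ∈ T, X ×ˢ X) :
    0 ≤ ∑ p : V × V, if ℓ ≤ C p.1 p.2 then x p.1 * x p.2 else 0 := by
  classical
  rw [← Finset.sum_filter]
  have hTfin : T.Finite := Set.toFinite T
  have hfil : Finset.univ.filter (fun p : V × V => ℓ ≤ C p.1 p.2)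
      = hTfin.toFinset.biUnion (fun X => (Set.toFinite (X ×ˢ X)).toFinset) := by
    ext p
    simp only [Finset.mem_filter, Finset.mem_univ, true_and, Finset.mem_biUnion,
      Set.Finite.mem_toFinset]
    have := Set.ext_iff.mp hS p
    simp only [Set.mem_setOf_eq, Set.mem_iUnion] at this
    rw [this]
    constructor
    · rintro ⟨X, hX, hp⟩; exact ⟨X, hX, hp⟩
    · rintro ⟨X, hX, hp⟩; exact ⟨X, hX, hp⟩
  rw [hfil, Finset.sum_biUnion]
  · apply Finset.sum_nonneg
    intro X _
    have hX : (Set.toFinite (X ×ˢ X)).toFinset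
        = (Set.toFinite X).toFinset ×ˢ (Set.toFinite X).toFinset := by
      ext p
      simp only [Set.Finite.mem_toFinset, Finset.mem_product]
      exact Iff.rfl
    have : ∑ p ∈ (Set.toFinite (X ×ˢ X)).toFinset, x p.1 * x p.2
        = (∑ v ∈ (Set.toFinite X).toFinset, x v) * (∑ v ∈ (Set.toFinite X).toFinset, x v) := by
      rw [hX, Finset.sum_mul_sum, ← Finset.sum_product']
    rw [this]
    exact mul_self_nonneg _
  · intro X hX Y hY hXY
    have hdis : Disjoint X Y :=
      hT (hTfin.mem_toFinset.mp hX) (hTfin.mem_toFinset.mp hY) hXY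
    simp only [Finset.disjoint_left, Set.Finite.mem_toFinset]
    intro p hpX hpY
    exact (Set.disjoint_left.mp hdis hpX.1) hpY.1

private lemma auxmain {V : Type*} [Fintype V] :
    ∀ (n : ℕ) (C : Matrix V V ℝ), (posvals C).card ≤ n →
    (∀ v w : V, 0 ≤ C v w) →
    (∀ ℓ : ℝ, ∃ T : Set (Set V), T.PairwiseDisjoint id ∧
      {p : V × V | ℓ ≤ C p.1 p.2} = ⋃ X ∈ T, X ×ˢ X) →
    ∀ x : V → ℝ, 0 ≤ ∑ p : V × V, x p.1 * C p.1 p.2 * x p.2 := by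
  classical
  intro n
  induction n with
  | zero =>
    intro C hcard hnn _ x
    have hzero : ∀ v w : V, C v w = 0 := by
      intro v w
      by_contra h
      have hpos : 0 < C v w := lt_of_le_of_ne (hnn v w) (Ne.symm h)
      have := mem_posvals hpos
      simp [Finset.card_eq_zero.mp (Nat.le_zero.mp hcard)] at this
    simp [hzero]
  | succ n ih =>
    intro C hcard hnn hterraced x
    rcases Finset.eq_empty_or_nonempty (posvals C) with hemp | hne
    · -- no positive values: C = 0
      have hzero : ∀ v w : V, C v w = 0 := by
        intro v w
        by_contra h
        have hpos : 0 < C v w := lt_of_le_of_ne (hnn v w) (Ne.symm h)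
        have := mem_posvals hpos
        simp [hemp] at this
      simp [hzero]
    · set m : ℝ := (posvals C).max' hne with hm
      have hmmem : m ∈ posvals C := (posvals C).max'_mem hne
      have hmpos : 0 < m := (Finset.mem_filter.mp hmmem).2
      have hmax : ∀ v w : V, C v w ≤ m := by
        intro v w
        rcases eq_or_lt_of_le (hnn v w) with h | h
        · rw [← h]; exact le_of_lt hmpos
        · exact (posvals C).le_max' _ (mem_posvals h)
      -- second largest value (or 0)
      set E : Finset ℝ := (posvals C).erase m with hE
      set m' : ℝ := if hEne : E.Nonempty then E.max' hEne else 0 with hm'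
      have hm'nn : 0 ≤ m' := by
        rw [hm']
        split
        · rename_i hEne
          have := E.max'_mem hEne
          exact le_of_lt (Finset.mem_filter.mp (Finset.mem_of_mem_erase this)).2
        · exact le_rfl
      have hm'lt : m' < m := by
        rw [hm']
        split
        · rename_i hEne
          have hmem := E.max'_mem hEne
          have hne' := Finset.ne_of_mem_erase hmem
          have hle : E.max' hEne ≤ m :=
            (posvals C).le_max' _ (Finset.mem_of_mem_erase hmem)
          exact lt_of_le_of_ne hle hne'
        · exact hmpos
      have hsmall : ∀ v w : V, C v w < m → C v w ≤ m' := by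
        intro v w h
        rcases eq_or_lt_of_le (hnn v w) with h0 | h0
        · rw [← h0]; exact hm'nn
        · have hmemE : C v w ∈ E := Finset.mem_erase.mpr ⟨ne_of_lt h, mem_posvals h0⟩
          rw [hm']
          split
          · exact E.le_max' _ hmemE
          · rename_i hEne; exact absurd ⟨_, hmemE⟩ hEne
      -- the reduced matrix
      set C' : Matrix V V ℝ :=
        fun v w => C v w - (m - m') * (if m ≤ C v w then 1 else 0) with hC'
      have hC'val : ∀ v w : V, C' v w = if m ≤ C v w then m' else C v w := by
        intro v w
        rw [hC']
        by_cases h : m ≤ C v w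
        · have : C v w = m := le_antisymm (hmax v w) h
          simp [h, this]
        · simp [h]
      have hnn' : ∀ v w : V, 0 ≤ C' v w := by
        intro v w
        rw [hC'val]
        split
        · exact hm'nn
        · exact hnn v w
      have hle' : ∀ v w : V, C' v w ≤ m' := by
        intro v w
        rw [hC'val]
        split
        · exact le_refl _
        · rename_i h; exact hsmall v w (lt_of_not_ge h)
      have hter' : ∀ ℓ : ℝ, ∃ T : Set (Set V), T.PairwiseDisjoint id ∧
          {p : V × V | ℓ ≤ C' p.1 p.2} = ⋃ X ∈ T, X ×ˢ X := by
        intro ℓ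
        by_cases hℓ : ℓ ≤ m'
        · obtain ⟨T, hT1, hT2⟩ := hterraced ℓ
          refine ⟨T, hT1, ?_⟩
          rw [← hT2]
          ext p
          simp only [Set.mem_setOf_eq]
          rw [hC'val]
          split
          · rename_i h
            exact ⟨fun _ => le_trans hℓ (le_trans (le_of_lt hm'lt) h), fun _ => hℓ⟩
          · exact Iff.rfl
        · refine ⟨∅, Set.pairwiseDisjoint_empty, ?_⟩
          simp only [Set.mem_empty_iff_false, Set.iUnion_of_empty, Set.iUnion_empty]
          ext p
          simp only [Set.mem_setOf_eq, Set.mem_empty_iff_false, iff_false, not_le]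
          exact lt_of_le_of_lt (hle' p.1 p.2) (lt_of_not_ge hℓ)
      have hcard' : (posvals C').card ≤ n := by
        have hsub : posvals C' ⊆ E := by
          intro r hr
          rw [posvals, Finset.mem_filter, Finset.mem_image] at hr
          obtain ⟨⟨p, -, hp⟩, hrpos⟩ := hr
          subst hp
          rw [hC'val p.1 p.2] at hrpos ⊢
          by_cases h : m ≤ C p.1 p.2
          · rw [if_pos h] at hrpos ⊢
            rw [hm'] at hrpos ⊢
            by_cases hEne : E.Nonempty
            · rw [dif_pos hEne]
              exact E.max'_mem hEne
            · rw [dif_neg hEne] at hrpos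
              exact absurd hrpos (lt_irrefl 0)
          · rw [if_neg h] at hrpos ⊢
            exact Finset.mem_erase.mpr ⟨ne_of_lt (lt_of_not_ge h), mem_posvals hrpos⟩
        calc (posvals C').card ≤ E.card := Finset.card_le_card hsub
          _ = (posvals C).card - 1 := Finset.card_erase_of_mem hmmem
          _ ≤ (n + 1) - 1 := Nat.sub_le_sub_right hcard 1
          _ = n := rfl
      -- decomposition of the quadratic form
      have hdecomp : ∑ p : V × V, x p.1 * C p.1 p.2 * x p.2
          = (∑ p : V × V, x p.1 * C' p.1 p.2 * x p.2)
            + (m - m') * ∑ p : V × V, (if m ≤ C p.1 p.2 then x p.1 * x p.2 else 0) := by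
        rw [Finset.mul_sum, ← Finset.sum_add_distrib]
        apply Finset.sum_congr rfl
        intro p _
        simp only [hC']
        split_ifs with h <;> ring
      rw [hdecomp]
      have h1 := ih C' hcard' hnn' hter' x
      obtain ⟨T, hT1, hT2⟩ := hterraced m
      have h2 := sumA x C m T hT1 hT2
      have h3 : 0 ≤ m - m' := sub_nonneg.mpr (le_of_lt hm'lt)
      positivity

/-- A real nonnegative terraced matrix is positive semidefinite. -/
theorem stmt_3 {V : Type*} [Fintype V] (C : Matrix V V ℝ) (hsymm : C.IsSymm)
    (hnn : ∀ v w : V, 0 ≤ C v w)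
    (hterraced : ∀ ℓ : ℝ, ∃ T : Set (Set V), T.PairwiseDisjoint id ∧
      {p : V × V | ℓ ≤ C p.1 p.2} = ⋃ X ∈ T, X ×ˢ X) :
    ∀ x : V → ℝ, 0 ≤ x ⬝ᵥ C.mulVec x := by
  intro x
  have h : x ⬝ᵥ C.mulVec x = ∑ p : V × V, x p.1 * C p.1 p.2 * x p.2 := by
    simp only [dotProduct, mulVec, Fintype.sum_prod_type, Finset.mul_sum]
    apply Finset.sum_congr rfl
    intro v _
    apply Finset.sum_congr rfl
    intro w _
    ring
  rw [h]
  exact auxmain (posvals C).card C le_rfl hnn hterraced x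
end

section
/- Let C be a real symmetric nonnegative V×V matrix with zero diagonal whose off-diagonal entries satisfy the Gomory-Hu triangle inequality c_{xz} ≥ min{c_{xy}, c_{yz}} for distinct x, y, z. Let m(v) = max_{w ≠ v} c_{vw}. Then the matrix C + diag(m(v) : v ∈ V) is positive semidefinite. -/
open Matrix Finset

/-- Key lemma: on any finite "block" `S`, for a matrix satisfying the hypotheses
restricted to `S`, and a function `M` which is a nonnegative upper bound for the
off-diagonal row entries within `S`, attained unless it is `0`, the quadratic
form is nonnegative. -/
private theorem gh_key {V : Type*} [DecidableEq V] (x : V → ℝ) (S : Finset V) :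
    ∀ (C : V → V → ℝ) (M : V → ℝ),
    (∀ v ∈ S, ∀ w ∈ S, C v w = C w v) →
    (∀ v ∈ S, C v v = 0) →
    (∀ v ∈ S, ∀ w ∈ S, 0 ≤ C v w) →
    (∀ a ∈ S, ∀ b ∈ S, ∀ c ∈ S, a ≠ b → b ≠ c → a ≠ c → min (C a b) (C b c) ≤ C a c) →
    (∀ v ∈ S, 0 ≤ M v) →
    (∀ v ∈ S, ∀ w ∈ S, w ≠ v → C v w ≤ M v) →
    (∀ v ∈ S, M v = 0 ∨ ∃ w ∈ S, w ≠ v ∧ C v w = M v) →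
    0 ≤ (∑ v ∈ S, ∑ w ∈ S, x v * C v w * x w) + ∑ v ∈ S, M v * x v ^ 2 := by
  induction S using Finset.strongInduction with
  | _ S ih =>
  intro C M hsymm hdiag hnn hGH hM0 hMub hMatt
  by_cases hpair : ∃ a ∈ S, ∃ b ∈ S, a ≠ b
  · obtain ⟨a₁, ha₁, b₁, hb₁, hab₁⟩ := hpair
    set P := (S ×ˢ S).filter (fun p => p.1 ≠ p.2) with hP
    have hPne : P.Nonempty :=
      ⟨(a₁, b₁), Finset.mem_filter.mpr ⟨Finset.mem_product.mpr ⟨ha₁, hb₁⟩, hab₁⟩⟩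
    set μ := P.inf' hPne (fun p => C p.1 p.2) with hμdef
    have hμle : ∀ v ∈ S, ∀ w ∈ S, v ≠ w → μ ≤ C v w := by
      intro v hv w hw hvw
      have hmem : (v, w) ∈ P := by
        simp only [hP, Finset.mem_filter, Finset.mem_product]
        exact ⟨⟨hv, hw⟩, hvw⟩
      exact Finset.inf'_le (fun p => C p.1 p.2) hmem
    obtain ⟨p₀, hp₀, hp₀eq⟩ := Finset.exists_mem_eq_inf' hPne (fun p => C p.1 p.2)
    simp only [hP, Finset.mem_filter, Finset.mem_product] at hp₀
    obtain ⟨⟨ha, hb⟩, hab⟩ := hp₀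
    set a := p₀.1
    set b := p₀.2
    have hμ0 : 0 ≤ μ := by rw [hμdef, hp₀eq]; exact hnn a ha b hb
    have hCab : C a b = μ := hp₀eq.symm
    -- the block of a
    set B := S.filter (fun w => w = a ∨ μ < C a w) with hBdef
    set T := S \ B with hTdef
    have hBsub : B ⊆ S := Finset.filter_subset _ _
    have hTsub : T ⊆ S := Finset.sdiff_subset
    have haB : a ∈ B := by simp [hBdef, ha]
    have hbB : b ∉ B := by
      simp only [hBdef, Finset.mem_filter]
      rintro ⟨-, h | h⟩
      · exact hab h.symm
      · exact absurd hCab (by linarith)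
    have hbT : b ∈ T := Finset.mem_sdiff.mpr ⟨hb, hbB⟩
    have haT : a ∉ T := fun h => (Finset.mem_sdiff.mp h).2 haB
    have hBss : B ⊂ S := ⟨hBsub, fun h => hbB (h hb)⟩
    have hTss : T ⊂ S := ⟨hTsub, fun h => haT (h ha)⟩
    -- inside B all off-diagonal entries exceed μ
    have hBB : ∀ v ∈ B, ∀ w ∈ B, v ≠ w → μ < C v w := by
      intro v hv w hw hvw
      have hv' := Finset.mem_filter.mp hv
      have hw' := Finset.mem_filter.mp hw
      rcases hv'.2 with hva0 | hav
      · rcases hw'.2 with hwa0 | haw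
        · exact absurd (hva0.trans hwa0.symm) hvw
        · rw [hva0]; exact haw
      · rcases hw'.2 with hwa0 | haw
        · rw [hsymm v hv'.1 w hw'.1, hwa0]; exact hav
        · have hva : v ≠ a := by
            intro h; rw [h] at hav; rw [hdiag a ha] at hav; linarith
          have hwa : w ≠ a := by
            intro h; rw [h] at haw; rw [hdiag a ha] at haw; linarith
          have := hGH v hv'.1 a ha w hw'.1 hva hwa.symm hvw
          rw [hsymm v hv'.1 a ha] at this
          exact lt_of_lt_of_le (lt_min hav haw) this
    -- entries between B and T equal μ
    have hBT : ∀ v ∈ B, ∀ w ∈ T, C v w = μ := by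
      intro v hv w hw
      have hv' := Finset.mem_filter.mp hv
      have hw' := Finset.mem_sdiff.mp hw
      have hwS := hw'.1
      have hwB := hw'.2
      have hwa : w ≠ a := fun h => hwB (h ▸ haB)
      have hCaw : C a w ≤ μ := by
        by_contra h
        exact hwB (Finset.mem_filter.mpr ⟨hwS, Or.inr (lt_of_not_ge h)⟩)
      have hCaw' : C a w = μ := le_antisymm hCaw (hμle a ha w hwS hwa.symm)
      have hvw : v ≠ w := fun h => hwB (h ▸ hv)
      rcases hv'.2 with hva0 | hav
      · rw [hva0]; exact hCaw'
      · have hva : v ≠ a := by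
          intro h; rw [h] at hav; rw [hdiag a ha] at hav; linarith
        refine le_antisymm ?_ (hμle v hv'.1 w hwS hvw)
        by_contra h
        push_neg at h
        have := hGH a ha v hv'.1 w hwS hva.symm hvw (fun h' => hwa h'.symm)
        rw [hCaw'] at this
        have := lt_of_lt_of_le (lt_min hav h) this
        exact lt_irrefl _ this
    -- shifted matrix
    set C' : V → V → ℝ := fun v w => if v = w then 0 else C v w - μ with hC'def
    set M' : V → ℝ := fun v => M v - μ with hM'def
    have hMμ : ∀ v ∈ S, μ ≤ M v := by
      intro v hv
      by_cases hva : v = a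
      · have h1 : μ ≤ C v b := hμle v hv b hb (fun h => hab (hva.symm.trans h))
        have h2 : C v b ≤ M v := hMub v hv b hb (fun h => hab (h.trans hva).symm)
        linarith
      · have h1 : μ ≤ C v a := hμle v hv a ha hva
        have h2 : C v a ≤ M v := hMub v hv a ha (Ne.symm hva)
        linarith
    -- hypotheses of ih for a sub-block U ∈ {B, T}
    have hyps : ∀ U : Finset V, U ⊆ S →
        ((∀ v ∈ U, ∀ w ∈ U, v ≠ w → μ ≤ C v w) →
        (∀ v ∈ U, M v = μ ∨ ∃ w ∈ U, w ≠ v ∧ C v w = M v) →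
        (∀ v ∈ U, ∀ w ∈ U, C' v w = C' w v) ∧
        (∀ v ∈ U, C' v v = 0) ∧
        (∀ v ∈ U, ∀ w ∈ U, 0 ≤ C' v w) ∧
        (∀ a' ∈ U, ∀ b' ∈ U, ∀ c' ∈ U, a' ≠ b' → b' ≠ c' → a' ≠ c' →
          min (C' a' b') (C' b' c') ≤ C' a' c') ∧
        (∀ v ∈ U, 0 ≤ M' v) ∧
        (∀ v ∈ U, ∀ w ∈ U, w ≠ v → C' v w ≤ M' v) ∧
        (∀ v ∈ U, M' v = 0 ∨ ∃ w ∈ U, w ≠ v ∧ C' v w = M' v)) := by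
      intro U hUS hlow hatt
      refine ⟨?_, ?_, ?_, ?_, ?_, ?_, ?_⟩
      · intro v hv w hw
        simp only [hC'def]
        by_cases h : v = w
        · simp [h]
        · simp [h, Ne.symm h, hsymm v (hUS hv) w (hUS hw)]
      · intro v hv; simp [hC'def]
      · intro v hv w hw
        simp only [hC'def]
        by_cases h : v = w
        · simp [h]
        · simp only [if_neg h]; linarith [hlow v hv w hw h]
      · intro p hp q hq r hr hpq hqr hpr
        simp only [hC'def, if_neg hpq, if_neg hqr, if_neg hpr]
        have h := hGH p (hUS hp) q (hUS hq) r (hUS hr) hpq hqr hpr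
        have : min (C p q - μ) (C q r - μ) = min (C p q) (C q r) - μ := by
          rcases le_total (C p q) (C q r) with h2 | h2 <;>
            simp [min_def, h2]
        rw [this]
        linarith
      · intro v hv
        simp only [hM'def]
        linarith [hMμ v (hUS hv)]
      · intro v hv w hw hwv
        simp only [hC'def, hM'def, if_neg (Ne.symm hwv)]
        linarith [hMub v (hUS hv) w (hUS hw) hwv]
      · intro v hv
        rcases hatt v hv with h | ⟨w, hw, hwv, hCw⟩
        · left; simp [hM'def, h]
        · right
          exact ⟨w, hw, hwv, by simp [hC'def, if_neg (Ne.symm hwv), hM'def, hCw]⟩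
    -- attainment within B, resp. T
    have hattB : ∀ v ∈ B, M v = μ ∨ ∃ w ∈ B, w ≠ v ∧ C v w = M v := by
      intro v hv
      rcases hMatt v (hBsub hv) with h | ⟨w, hwS, hwv, hCw⟩
      · left; have := hMμ v (hBsub hv); linarith
      · by_cases hwB : w ∈ B
        · right; exact ⟨w, hwB, hwv, hCw⟩
        · left
          have hwT : w ∈ T := Finset.mem_sdiff.mpr ⟨hwS, hwB⟩
          rw [← hCw]; exact hBT v hv w hwT
    have hattT : ∀ v ∈ T, M v = μ ∨ ∃ w ∈ T, w ≠ v ∧ C v w = M v := by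
      intro v hv
      rcases hMatt v (hTsub hv) with h | ⟨w, hwS, hwv, hCw⟩
      · left; have := hMμ v (hTsub hv); linarith
      · by_cases hwB : w ∈ B
        · left
          rw [← hCw, hsymm v (hTsub hv) w hwS]
          exact hBT w hwB v hv
        · right; exact ⟨w, Finset.mem_sdiff.mpr ⟨hwS, hwB⟩, hwv, hCw⟩
    have hlowB : ∀ v ∈ B, ∀ w ∈ B, v ≠ w → μ ≤ C v w :=
      fun v hv w hw hvw => le_of_lt (hBB v hv w hw hvw)
    have hlowT : ∀ v ∈ T, ∀ w ∈ T, v ≠ w → μ ≤ C v w :=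
      fun v hv w hw hvw => hμle v (hTsub hv) w (hTsub hw) hvw
    obtain ⟨s1, s2, s3, s4, s5, s6, s7⟩ := hyps B hBsub hlowB hattB
    obtain ⟨t1, t2, t3, t4, t5, t6, t7⟩ := hyps T hTsub hlowT hattT
    have h1 := ih B hBss C' M' s1 s2 s3 s4 s5 s6 s7
    have h2 := ih T hTss C' M' t1 t2 t3 t4 t5 t6 t7
    -- cross terms of C' vanish
    have hcross0 : ∀ v ∈ B, ∀ w ∈ T, C' v w = 0 ∧ C' w v = 0 := by
      intro v hv w hw
      have hvw : v ≠ w := fun h => (Finset.mem_sdiff.mp hw).2 (h ▸ hv)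
      constructor
      · simp [hC'def, if_neg hvw, hBT v hv w hw]
      · simp [hC'def, if_neg (Ne.symm hvw),
          hsymm w (hTsub hw) v (hBsub hv), hBT v hv w hw]
    -- the algebraic identity
    have key_eq : (∑ v ∈ S, ∑ w ∈ S, x v * C v w * x w) + ∑ v ∈ S, M v * x v ^ 2
        = μ * (∑ v ∈ S, x v) ^ 2
          + ((∑ v ∈ B, ∑ w ∈ B, x v * C' v w * x w) + ∑ v ∈ B, M' v * x v ^ 2)
          + ((∑ v ∈ T, ∑ w ∈ T, x v * C' v w * x w) + ∑ v ∈ T, M' v * x v ^ 2) := by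
      have e1 : (∑ v ∈ S, ∑ w ∈ S, x v * C v w * x w)
          = (∑ v ∈ S, ∑ w ∈ S, x v * C' v w * x w)
            + μ * (∑ v ∈ S, x v) ^ 2 - μ * ∑ v ∈ S, x v ^ 2 := by
        have : ∀ v ∈ S, ∀ w ∈ S, x v * C v w * x w
            = x v * C' v w * x w + μ * (x v * x w)
              - (if v = w then μ * (x v * x w) else 0) := by
          intro v hv w hw
          by_cases h : v = w
          · subst h; simp [hC'def, hdiag v hv]
          · simp only [hC'def, if_neg h]; ring
        rw [Finset.sum_congr rfl (fun v hv => Finset.sum_congr rfl (this v hv))]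
        have ediag : ∀ v ∈ S, (∑ w ∈ S, if v = w then μ * (x v * x w) else 0)
            = μ * x v ^ 2 := by
          intro v hv
          rw [Finset.sum_ite_eq S v (fun w => μ * (x v * x w)), if_pos hv]
          ring
        simp only [Finset.sum_sub_distrib, Finset.sum_add_distrib]
        rw [Finset.sum_congr rfl ediag]
        have : (∑ v ∈ S, ∑ w ∈ S, μ * (x v * x w)) = μ * (∑ v ∈ S, x v) ^ 2 := by
          rw [sq, Finset.sum_mul_sum, Finset.mul_sum]
          exact Finset.sum_congr rfl fun v _ => by
            rw [Finset.mul_sum]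
        rw [this, Finset.mul_sum]
      have esplit : ∀ f : V → ℝ, (∑ v ∈ S, f v) = (∑ v ∈ T, f v) + ∑ v ∈ B, f v := by
        intro f
        exact (Finset.sum_sdiff hBsub).symm
      have e2 : (∑ v ∈ S, ∑ w ∈ S, x v * C' v w * x w)
          = (∑ v ∈ B, ∑ w ∈ B, x v * C' v w * x w)
            + ∑ v ∈ T, ∑ w ∈ T, x v * C' v w * x w := by
        rw [esplit]
        have eB : ∀ v ∈ B, (∑ w ∈ S, x v * C' v w * x w)
            = ∑ w ∈ B, x v * C' v w * x w := by
          intro v hv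
          rw [esplit]
          have : (∑ w ∈ T, x v * C' v w * x w) = 0 :=
            Finset.sum_eq_zero fun w hw => by
              rw [(hcross0 v hv w hw).1]; ring
          rw [this]; ring
        have eT : ∀ v ∈ T, (∑ w ∈ S, x v * C' v w * x w)
            = ∑ w ∈ T, x v * C' v w * x w := by
          intro v hv
          rw [esplit]
          have : (∑ w ∈ B, x v * C' v w * x w) = 0 :=
            Finset.sum_eq_zero fun w hw => by
              rw [(hcross0 w hw v hv).2]; ring
          rw [this]; ring
        rw [Finset.sum_congr rfl eB, Finset.sum_congr rfl eT]
        ring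
      have e3 : (∑ v ∈ S, M v * x v ^ 2)
          = (∑ v ∈ B, M' v * x v ^ 2) + (∑ v ∈ T, M' v * x v ^ 2)
            + μ * ∑ v ∈ S, x v ^ 2 := by
        have : ∀ v ∈ S, M v * x v ^ 2 = M' v * x v ^ 2 + μ * x v ^ 2 := by
          intro v hv; simp only [hM'def]; ring
        rw [Finset.sum_congr rfl this, Finset.sum_add_distrib, ← Finset.mul_sum,
          esplit (fun v => M' v * x v ^ 2)]
        ring
      rw [e1, e2, e3]
      ring
    rw [key_eq]
    have := mul_nonneg hμ0 (sq_nonneg (∑ v ∈ S, x v))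
    linarith
  · -- no two distinct elements: diagonal contribution only
    push_neg at hpair
    have hd : ∀ v ∈ S, ∀ w ∈ S, x v * C v w * x w = 0 := by
      intro v hv w hw
      have : v = w := hpair v hv w hw
      subst this
      rw [hdiag v hv]; ring
    have : (∑ v ∈ S, ∑ w ∈ S, x v * C v w * x w) = 0 :=
      Finset.sum_eq_zero fun v hv => Finset.sum_eq_zero (hd v hv)
    rw [this, zero_add]
    exact Finset.sum_nonneg fun v hv =>
      mul_nonneg (hM0 v hv) (sq_nonneg _)

/-- For a nonnegative symmetric matrix with zero diagonal satisfying the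
Gomory-Hu triangle inequality off the diagonal, adding the diagonal of row
maxima yields a positive semidefinite matrix. -/
theorem stmt_4 {V : Type*} [Fintype V] [DecidableEq V] (hcard : 1 < Fintype.card V)
    (C : Matrix V V ℝ) (hsymm : C.IsSymm)
    (hdiag : ∀ v : V, C v v = 0) (hnn : ∀ v w : V, 0 ≤ C v w)
    (hGH : ∀ x y z : V, x ≠ y → y ≠ z → x ≠ z → min (C x y) (C y z) ≤ C x z)
    (m : V → ℝ) (hm : ∀ v : V, IsGreatest {t | ∃ w : V, w ≠ v ∧ C v w = t} (m v)) :
    ∀ x : V → ℝ, 0 ≤ x ⬝ᵥ (C + Matrix.diagonal m).mulVec x := by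
  intro x
  have key := gh_key x Finset.univ (fun v w => C v w) m
    (fun v _ w _ => hsymm.apply w v)
    (fun v _ => hdiag v)
    (fun v _ w _ => hnn v w)
    (fun a _ b _ c _ hab hbc hac => hGH a b c hab hbc hac)
    (fun v _ => by
      obtain ⟨w, hw⟩ := Fintype.exists_ne_of_one_lt_card hcard v
      exact le_trans (hnn v w) ((hm v).2 ⟨w, hw, rfl⟩))
    (fun v _ w _ hwv => (hm v).2 ⟨w, hwv, rfl⟩)
    (fun v _ => Or.inr (by
      obtain ⟨w, hwv, hCw⟩ := (hm v).1
      exact ⟨w, Finset.mem_univ w, hwv, hCw⟩))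
  have : x ⬝ᵥ (C + Matrix.diagonal m).mulVec x
      = (∑ v ∈ Finset.univ, ∑ w ∈ Finset.univ, x v * C v w * x w)
        + ∑ v ∈ Finset.univ, m v * x v ^ 2 := by
    simp only [dotProduct, mulVec, Matrix.add_apply, Matrix.diagonal_apply]
    rw [← Finset.sum_add_distrib]
    refine Finset.sum_congr rfl fun v _ => ?_
    have h : ∀ w : V, x v * ((C v w + if v = w then m v else 0) * x w)
        = x v * C v w * x w + (if v = w then m v * (x v * x w) else 0) := by
      intro w; by_cases h : v = w <;> simp [h] <;> ring
    rw [Finset.mul_sum, Finset.sum_congr rfl (fun w _ => h w), Finset.sum_add_distrib,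
      Finset.sum_ite_eq Finset.univ v (fun w => m v * (x v * x w)),
      if_pos (Finset.mem_univ v)]
    ring
  rw [this]
  exact key
end

section
/- Let C be a real symmetric nonnegative V×V matrix with zero diagonal whose off-diagonal entries satisfy the Gomory-Hu triangle inequality, and let M = max_{v,w} c_{vw}. Then every eigenvalue of C is at least −M, and −M is an eigenvalue of C (so the smallest eigenvalue of C equals −M), provided |V| ≥ 2. -/
/-!
Adding `M` on the diagonal turns `C` into a matrix `D` satisfying the ultrametric inequality
`min (D x y) (D y z) ≤ D x z` for all triples, with constant diagonal `M`. For `0 ≤ t < M` the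
relation `t < D x y` is then an equivalence relation, whose 0/1 matrix is a Gram matrix of class
indicators, hence positive semidefinite; integrating over `t ∈ [0, M)` recovers `D`, so `D` is
positive semidefinite and every eigenvalue of `C` is at least `-M`. Conversely, if `C a b = M`
then every other vertex is equidistant from `a` and `b`, so `e_a - e_b` is an eigenvector for `-M`.
-/

open Matrix MeasureTheory Set

lemma setIntegral_Ico_indicator_Iio_one {a b : ℝ} (ha : 0 ≤ a) (hab : a ≤ b) :
    ∫ t in Ico 0 b, (Iio a).indicator 1 t = a := by
  rw [setIntegral_indicator measurableSet_Iio, Ico_inter_Iio, min_eq_right hab]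
  simp [ha]

namespace Matrix

variable {V : Type*}

theorem posSemidef_of_equivalence [Fintype V] {R : Type*} [CommRing R] [PartialOrder R]
    [StarRing R] [StarOrderedRing R] {r : V → V → Prop} [DecidableRel r] (hr : Equivalence r) :
    (of fun x y => if r x y then (1 : R) else 0).PosSemidef := by
  classical
  let s : Setoid V := ⟨r, hr⟩
  let B : Matrix V (Quotient s) R := of fun x q => if Quotient.mk s x = q then 1 else 0
  convert posSemidef_self_mul_conjTranspose B using 1
  ext x y
  simp [B, mul_apply, s, Quotient.eq, apply_ite star]

theorem star_dotProduct_mulVec_eq_sum [Fintype V] (A : Matrix V V ℝ) (v : V → ℝ) :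
    star v ⬝ᵥ A *ᵥ v = ∑ x, ∑ y, v x * v y * A x y := by
  simp only [dotProduct, mulVec, Finset.mul_sum, star_trivial]
  exact Finset.sum_congr rfl fun _ _ => Finset.sum_congr rfl fun _ _ => by ring

theorem posSemidef_of_ultrametric [Fintype V] {D : Matrix V V ℝ} (hsymm : D.IsSymm) {M : ℝ}
    (hdiag : ∀ x, D x x = M) (hnn : ∀ x y, 0 ≤ D x y)
    (hult : ∀ x y z, min (D x y) (D y z) ≤ D x z) : D.PosSemidef := by
  have hle (x y : V) : D x y ≤ M := by
    simpa [hsymm.apply x y, hdiag] using hult x y x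
  let level (t : ℝ) : Matrix V V ℝ := of fun x y => if t < D x y then 1 else 0
  have level_psd {t : ℝ} (ht : t ∈ Ico 0 M) : (level t).PosSemidef := by
    classical
    convert posSemidef_of_equivalence (R := ℝ) (r := fun x y => t < D x y)
      ⟨fun x => ?_, fun {x y} h => ?_, fun {x y z} hxy hyz => ?_⟩
    · simpa [hdiag] using ht.2
    · simpa [hsymm.apply] using h
    · exact (lt_min hxy hyz).trans_le (hult x y z)
  have level_eq_indicator (x y : V) : (fun t => level t x y) = (Iio (D x y)).indicator 1 := by
    ext t
    simp [level, indicator_apply]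
  have level_integral (x y : V) : ∫ t in Ico 0 M, level t x y = D x y := by
    rw [level_eq_indicator]
    exact setIntegral_Ico_indicator_Iio_one (hnn x y) (hle x y)
  have level_integrable (x y : V) : IntegrableOn (fun t => level t x y) (Ico 0 M) := by
    rw [level_eq_indicator]
    exact (integrableOn_const measure_Ico_lt_top.ne).indicator measurableSet_Iio
  refine .of_dotProduct_mulVec_nonneg hsymm fun v => ?_
  calc 0 ≤ ∫ t in Ico 0 M, star v ⬝ᵥ level t *ᵥ v :=
        setIntegral_nonneg measurableSet_Ico fun t ht => (level_psd ht).dotProduct_mulVec_nonneg v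
    _ = star v ⬝ᵥ D *ᵥ v := by
      simp only [star_dotProduct_mulVec_eq_sum]
      rw [integral_finsetSum _ fun x _ => integrable_finsetSum _ fun y _ =>
        (level_integrable x y).const_mul _]
      refine Finset.sum_congr rfl fun x _ => ?_
      rw [integral_finsetSum _ fun y _ => (level_integrable x y).const_mul _]
      simp only [integral_const_mul, level_integral]

theorem PosSemidef.nonneg_of_mulVec_eq_smul [Fintype V] {A : Matrix V V ℝ} (hA : A.PosSemidef)
    {μ : ℝ} {v : V → ℝ} (hv : v ≠ 0) (hAv : A *ᵥ v = μ • v) : 0 ≤ μ := by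
  have h := hA.dotProduct_mulVec_nonneg v
  rw [hAv, dotProduct_smul, smul_eq_mul] at h
  exact nonneg_of_mul_nonneg_left h (dotProduct_star_self_pos_iff.2 hv)

variable {C : Matrix V V ℝ}

theorem ultrametric_add_smul_one [DecidableEq V]
    (hGH : ∀ x y z : V, x ≠ y → y ≠ z → x ≠ z → min (C x y) (C y z) ≤ C x z)
    (hdiag : ∀ x, C x x = 0) {M : ℝ} (hmax : ∀ x y, C x y ≤ M) (x y z : V) :
    min ((C + M • 1) x y) ((C + M • 1) y z) ≤ (C + M • 1) x z := by
  simp only [add_apply, smul_apply, one_apply, smul_eq_mul, mul_ite, mul_one, mul_zero]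
  by_cases hxy : x = y
  · subst hxy
    simp [hdiag]
  by_cases hyz : y = z
  · subst hyz
    simp [hdiag]
  by_cases hxz : x = z
  · subst hxz
    simpa [hxy, hyz, hdiag] using min_le_of_left_le (hmax x y)
  simpa [hxy, hyz, hxz] using hGH x y z hxy hyz hxz

theorem apply_eq_apply_of_isMax (hsymm : C.IsSymm)
    (hGH : ∀ x y z : V, x ≠ y → y ≠ z → x ≠ z → min (C x y) (C y z) ≤ C x z)
    {a b z : V} (hab : a ≠ b) (hza : z ≠ a) (hzb : z ≠ b) (hmax : ∀ x y, C x y ≤ C a b) :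
    C z a = C z b := by
  have h₁ := hGH z a b hza hab hzb
  have h₂ := hGH z b a hzb hab.symm hza
  rw [min_eq_left (hmax z a)] at h₁
  rw [hsymm.apply a b, min_eq_left (hmax z b)] at h₂
  exact le_antisymm h₁ h₂

theorem mulVec_single_sub_single_of_isMax [Fintype V] [DecidableEq V] (hsymm : C.IsSymm)
    (hGH : ∀ x y z : V, x ≠ y → y ≠ z → x ≠ z → min (C x y) (C y z) ≤ C x z)
    (hdiag : ∀ x, C x x = 0) {a b : V} (hab : a ≠ b) (hmax : ∀ x y, C x y ≤ C a b) :
    C *ᵥ (Pi.single a 1 - Pi.single b 1) = (-C a b) • (Pi.single a 1 - Pi.single b 1) := by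
  ext z
  simp only [mulVec_sub, mulVec_single, Pi.sub_apply, Pi.smul_apply, smul_eq_mul]
  by_cases hza : z = a
  · subst hza
    simp [hab, hdiag]
  by_cases hzb : z = b
  · subst hzb
    simp [hza, hdiag, hsymm.apply z a]
  simp [hza, hzb, apply_eq_apply_of_isMax hsymm hGH hab hza hzb hmax]

theorem exists_ne_apply_eq_of_isGreatest [Fintype V] (hcard : 1 < Fintype.card V)
    (hdiag : ∀ x, C x x = 0) (hnn : ∀ x y, 0 ≤ C x y) {M : ℝ}
    (hM : IsGreatest {t | ∃ x y : V, C x y = t} M) : ∃ a b : V, a ≠ b ∧ C a b = M := by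
  obtain ⟨a, b, habM⟩ := hM.1
  by_cases hab : a = b
  · subst hab
    obtain ⟨a', b', ha'b'⟩ := Fintype.exists_pair_of_one_lt_card hcard
    have hM0 : M = 0 := habM.symm.trans (hdiag a)
    exact ⟨a', b', ha'b', le_antisymm (hM.2 ⟨a', b', rfl⟩) (hM0 ▸ hnn a' b')⟩
  · exact ⟨a, b, hab, habM⟩

end Matrix

/-- For a nonnegative symmetric matrix with zero diagonal satisfying the
Gomory-Hu triangle inequality off the diagonal, the smallest eigenvalue is −M,
where M is the maximum entry. -/
theorem stmt_5 {V : Type*} [Fintype V] [DecidableEq V] (hcard : 1 < Fintype.card V)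
    (C : Matrix V V ℝ) (hsymm : C.IsSymm)
    (hdiag : ∀ v : V, C v v = 0) (hnn : ∀ v w : V, 0 ≤ C v w)
    (hGH : ∀ x y z : V, x ≠ y → y ≠ z → x ≠ z → min (C x y) (C y z) ≤ C x z)
    (M : ℝ) (hM : IsGreatest {t | ∃ v w : V, C v w = t} M) :
    (∀ (μ : ℝ) (v : V → ℝ), v ≠ 0 → C.mulVec v = μ • v → -M ≤ μ) ∧
    (∃ v : V → ℝ, v ≠ 0 ∧ C.mulVec v = (-M) • v) := by
  have hmax (x y : V) : C x y ≤ M := hM.2 ⟨x, y, rfl⟩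
  obtain ⟨a, b, hab, habM⟩ := exists_ne_apply_eq_of_isGreatest hcard hdiag hnn hM
  have hM0 : 0 ≤ M := habM ▸ hnn a b
  constructor
  · intro μ v hv hCv
    have hD : (C + M • 1).PosSemidef :=
      posSemidef_of_ultrametric (hsymm.add (isSymm_one.smul M)) (M := M) (by simp [hdiag])
        (fun x y => add_nonneg (hnn x y) (smul_nonneg hM0 (zero_le_one_elem x y)))
        (ultrametric_add_smul_one hGH hdiag hmax)
    have hDv : (C + M • 1) *ᵥ v = (μ + M) • v := by
      rw [add_mulVec, hCv, smul_mulVec, one_mulVec, add_smul]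
    linarith [hD.nonneg_of_mulVec_eq_smul hv hDv]
  · refine ⟨Pi.single a 1 - Pi.single b 1, fun h => by simpa [hab] using congrFun h a, ?_⟩
    rw [← habM]
    exact mulVec_single_sub_single_of_isMax hsymm hGH hdiag hab (habM ▸ hmax)
end

section
/- Let C be a real symmetric V×V matrix whose off-diagonal entries satisfy the Gomory-Hu triangle inequality, and let x ≠ y in V. If c_{xy} is maximal among the off-diagonal entries of row x and of row y, and c_{xx} = c_{yy}, then e_x − e_y is an eigenvector of C with eigenvalue c_{xx} − c_{xy}. -/
/-- If `C x y` is maximal among the off-diagonal entries of rows x and y and the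
diagonal entries at x and y agree, then `e_x − e_y` is an eigenvector of C with
eigenvalue `C x x − C x y`. -/
theorem stmt_6 {V : Type*} [Fintype V] [DecidableEq V]
    (C : Matrix V V ℝ) (hsymm : C.IsSymm)
    (hGH : ∀ x y z : V, x ≠ y → y ≠ z → x ≠ z → min (C x y) (C y z) ≤ C x z)
    (x y : V) (hxy : x ≠ y)
    (hmaxx : ∀ w : V, w ≠ x → C x w ≤ C x y)
    (hmaxy : ∀ w : V, w ≠ y → C y w ≤ C x y)
    (hdd : C x x = C y y) :
    C.mulVec (Pi.single x 1 - Pi.single y 1) =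
      (C x x - C x y) • (Pi.single x 1 - Pi.single y 1) := by
  have hs : ∀ a b : V, C a b = C b a := fun a b => (Matrix.IsSymm.apply hsymm b a)
  funext v
  have hmv : C.mulVec (Pi.single x 1 - Pi.single y 1) v = C v x - C v y := by
    simp [Matrix.mulVec, dotProduct, Pi.single_apply, mul_sub,
      Finset.sum_sub_distrib, mul_ite]
  rw [hmv]
  by_cases hvx : v = x
  · subst hvx
    simp [Pi.single_apply, hxy]
  · by_cases hvy : v = y
    · subst hvy
      simp [Pi.single_apply, hxy.symm, hs v x, hdd]
    · have h1 : C v x ≤ C v y := by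
        have h := hGH v x y hvx hxy hvy
        have hle : C v x ≤ C x y := by rw [hs v x]; exact hmaxx v hvx
        rwa [min_eq_left hle] at h
      have h2 : C v y ≤ C v x := by
        have h := hGH v y x hvy (Ne.symm hxy) hvx
        have hle : C v y ≤ C y x := by rw [hs v y, hs y x]; exact hmaxy v hvy
        rwa [min_eq_left hle] at h
      simp [Pi.single_apply, hvx, hvy, le_antisymm h1 h2]
end

section
/- Let C be a real symmetric V×V matrix whose off-diagonal entries satisfy the Gomory-Hu triangle inequality, and let x ≠ y in V. If e_x − e_y is an eigenvector of C with eigenvalue c_{xx} − c_{xy}, then c_{xy} is a maximum off-diagonal entry in its row and column and c_{xx} = c_{yy}. -/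
/-- If `e_x − e_y` is an eigenvector of C with eigenvalue `C x x − C x y`, then
`C x y` is a maximum off-diagonal entry in its row and column and
`C x x = C y y`. -/
theorem stmt_7 {V : Type*} [Fintype V] [DecidableEq V]
    (C : Matrix V V ℝ) (hsymm : C.IsSymm)
    (hGH : ∀ x y z : V, x ≠ y → y ≠ z → x ≠ z → min (C x y) (C y z) ≤ C x z)
    (x y : V) (hxy : x ≠ y)
    (heig : C.mulVec (Pi.single x 1 - Pi.single y 1) =
      (C x x - C x y) • (Pi.single x 1 - Pi.single y 1)) :
    (∀ w : V, w ≠ x → C x w ≤ C x y) ∧ (∀ w : V, w ≠ y → C y w ≤ C x y) ∧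
    C x x = C y y := by
  have hs : ∀ a b : V, C a b = C b a := fun a b => (Matrix.IsSymm.apply hsymm b a)
  have key : ∀ w : V, C w x - C w y =
      (C x x - C x y) * ((Pi.single x 1 : V → ℝ) w - (Pi.single y 1 : V → ℝ) w) := by
    intro w
    have := congrFun heig w
    simpa [Matrix.mulVec_sub, Matrix.mulVec_single, sub_eq_sub_iff_sub_eq_sub] using this
  have hyy : C x x = C y y := by
    have := key y
    simp [Pi.single_apply, hxy.symm, hs y x] at this
    linarith
  have heq : ∀ w : V, w ≠ x → w ≠ y → C w x = C w y := by
    intro w hwx hwy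
    have := key w
    simp [Pi.single_apply, hwx, hwy] at this
    linarith
  have h1 : ∀ w : V, w ≠ x → C x w ≤ C x y := by
    intro w hwx
    rcases eq_or_ne w y with rfl | hwy
    · exact le_refl _
    · have h := hGH x w y (Ne.symm hwx) hwy hxy
      have he := heq w hwx hwy
      have h2 : C w y = C x w := by rw [← he, hs w x]
      rw [h2, min_self] at h
      exact h
  refine ⟨h1, ?_, hyy⟩
  intro w hwy
  rcases eq_or_ne w x with rfl | hwx
  · exact le_of_eq (hs y w)
  · have he := heq w hwx hwy
    have := h1 w hwx
    calc C y w = C x w := by rw [hs y w, ← he, hs w x]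
    _ ≤ C x y := this
end

section
/- Let C be a real nonnegative symmetric n×n matrix with zero diagonal whose off-diagonal entries satisfy the Gomory-Hu triangle inequality, and let M be the maximum entry of C. Then the energy of C (the sum of the absolute values of its eigenvalues) is at most 2(n−1)M. -/
set_option linter.unusedSectionVars false
set_option linter.unusedVariables false
set_option maxHeartbeats 1000000

open Matrix Finset

section Helpers

variable {V : Type*} [Fintype V] [DecidableEq V]

noncomputable def posVals (C : Matrix V V ℝ) : Finset ℝ :=
  (Finset.image (fun p : V × V => C p.1 p.2) Finset.univ).filter (0 < ·)

lemma mem_posVals {C : Matrix V V ℝ} {a : ℝ} :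
    a ∈ posVals C ↔ (∃ v w, C v w = a) ∧ 0 < a := by
  simp [posVals, Finset.mem_filter, Finset.mem_image]

lemma conj_trace (U : Matrix V V ℝ) (hsU : star U * U = 1) (g : V → ℝ) :
    (U * diagonal g * star U).trace = ∑ i, g i := by
  rw [Matrix.trace_mul_cycle, hsU, Matrix.one_mul, Matrix.trace_diagonal]

lemma conj_mul_trace (U : Matrix V V ℝ) (hsU : star U * U = 1) (g f : V → ℝ) :
    (U * diagonal g * star U * (U * diagonal f * star U)).trace = ∑ i, g i * f i := by
  have h1 : U * diagonal g * star U * (U * diagonal f * star U)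
      = U * diagonal (fun i => g i * f i) * star U := by
    rw [← Matrix.diagonal_mul_diagonal]
    rw [Matrix.mul_assoc (U * diagonal g) (star U) _]
    rw [← Matrix.mul_assoc (star U) (U * diagonal f) (star U)]
    rw [← Matrix.mul_assoc (star U) U (diagonal f), hsU, Matrix.one_mul]
    rw [← Matrix.mul_assoc, ← Matrix.mul_assoc]
  rw [h1, conj_trace U hsU]

lemma conj_quad_le (U : Matrix V V ℝ) (hU : U * star U = 1) (g : V → ℝ)
    (hg : ∀ i, g i ≤ 1) (x : V → ℝ) :
    x ⬝ᵥ (U * diagonal g * star U) *ᵥ x ≤ x ⬝ᵥ x := by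
  have hUt : star U = Uᵀ := by
    rw [Matrix.star_eq_conjTranspose, Matrix.conjTranspose_eq_transpose_of_trivial]
  set y : V → ℝ := Uᵀ *ᵥ x with hy
  have h1 : x ⬝ᵥ (U * diagonal g * star U) *ᵥ x = y ⬝ᵥ diagonal g *ᵥ y := by
    rw [hUt, ← Matrix.mulVec_mulVec, ← Matrix.mulVec_mulVec, Matrix.dotProduct_mulVec x U,
      ← Matrix.mulVec_transpose]
  have h2 : y ⬝ᵥ y = x ⬝ᵥ x := by
    rw [hy, Matrix.dotProduct_mulVec, Matrix.vecMul_transpose, Matrix.mulVec_mulVec]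
    rw [← hUt, hU, Matrix.one_mulVec]
  rw [h1, ← h2]
  simp only [dotProduct, Matrix.mulVec_diagonal]
  refine Finset.sum_le_sum fun i _ => ?_
  nlinarith [mul_self_nonneg (y i), hg i]

lemma traceQE_le (Q : Matrix V V ℝ) (hQ : ∀ x : V → ℝ, x ⬝ᵥ Q *ᵥ x ≤ x ⬝ᵥ x)
    (r : V → V) (E : Matrix V V ℝ) (hE : ∀ v w, E v w = if r v = r w then 1 else 0) :
    (Q * E).trace ≤ (Fintype.card V : ℝ) := by
  classical
  set x : V → V → ℝ := fun u v => if r v = u then 1 else 0 with hx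
  have hEe : ∀ v w, E v w = ∑ u, x u v * x u w := by
    intro v w
    rw [hE]
    rw [Finset.sum_congr rfl (fun u _ => (by
      by_cases h1 : r v = u <;> by_cases h2 : r w = u <;>
        simp [hx, h1, h2] : x u v * x u w = if r v = u ∧ r w = u then 1 else 0))]
    by_cases h : r v = r w
    · rw [Finset.sum_eq_single (r v)]
      · simp [h]
      · intro b _ hb; simp [Ne.symm hb]
      · simp
    · rw [Finset.sum_eq_zero]; · simp [h]
      intro b _
      by_cases h1 : r v = b <;> by_cases h2 : r w = b <;> simp_all
  have key : (Q * E).trace = ∑ u, (x u) ⬝ᵥ Q *ᵥ (x u) := by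
    calc (Q * E).trace = ∑ v, ∑ w, Q v w * E w v := by
          simp [Matrix.trace, Matrix.diag, Matrix.mul_apply]
      _ = ∑ v, ∑ w, ∑ u, Q v w * (x u w * x u v) := by
          simp only [hEe, Finset.mul_sum]
      _ = ∑ v, ∑ u, ∑ w, Q v w * (x u w * x u v) :=
          Finset.sum_congr rfl fun v _ => Finset.sum_comm
      _ = ∑ u, ∑ v, ∑ w, Q v w * (x u w * x u v) := Finset.sum_comm
      _ = ∑ u, (x u) ⬝ᵥ Q *ᵥ (x u) := by
          refine Finset.sum_congr rfl fun u _ => ?_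
          simp only [dotProduct, Matrix.mulVec, Finset.mul_sum]
          exact Finset.sum_congr rfl fun v _ => Finset.sum_congr rfl fun w _ => by ring
  have hxx : ∑ u, (x u) ⬝ᵥ (x u) = (Fintype.card V : ℝ) := by
    simp only [dotProduct]
    rw [Finset.sum_comm]
    have h1 : ∀ v : V, ∑ u, x u v * x u v = 1 := by
      intro v
      rw [Finset.sum_eq_single (r v)]
      · simp [hx]
      · intro b _ hb; simp [hx, Ne.symm hb]
      · simp
    simp [h1, Finset.card_univ]
  rw [key, ← hxx]
  exact Finset.sum_le_sum fun u _ => hQ (x u)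

lemma key_lemma (Q : Matrix V V ℝ) (hQ : ∀ x : V → ℝ, x ⬝ᵥ Q *ᵥ x ≤ x ⬝ᵥ x)
    (hQtr : 1 ≤ Q.trace) :
    ∀ (k : ℕ) (C : Matrix V V ℝ) (M : ℝ), (posVals C).card = k →
    (∀ v w, C v w = C w v) → (∀ v, C v v = 0) → (∀ v w, 0 ≤ C v w) →
    (∀ x y z : V, x ≠ y → y ≠ z → x ≠ z → min (C x y) (C y z) ≤ C x z) →
    0 ≤ M → (∀ v w, C v w ≤ M) →
    (Q * C).trace ≤ ((Fintype.card V : ℝ) - 1) * M := by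
  intro k
  induction k using Nat.strong_induction_on with
  | _ k IH =>
  intro C M hcard hsymm hdiag hnn hGH hM0 hMub
  classical
  have hn1 : (0:ℝ) ≤ (Fintype.card V : ℝ) - 1 := by
    have : Nonempty V := by
      by_contra h
      rw [not_nonempty_iff] at h
      have : Q.trace = 0 := by simp [Matrix.trace]
      linarith
    have : 1 ≤ Fintype.card V := Fintype.card_pos
    have : (1:ℝ) ≤ (Fintype.card V : ℝ) := by exact_mod_cast this
    linarith
  rcases Finset.eq_empty_or_nonempty (posVals C) with hT | hT
  · have hzero : C = 0 := by
      ext v w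
      by_contra h
      have hpos : 0 < C v w := lt_of_le_of_ne (hnn v w) (by simpa [eq_comm] using h)
      have : C v w ∈ posVals C := mem_posVals.2 ⟨⟨v, w, rfl⟩, hpos⟩
      simp [hT] at this
    rw [hzero]
    simpa using mul_nonneg hn1 hM0
  · set T := posVals C with hTdef
    set m := T.min' hT with hm
    have hmT : m ∈ T := T.min'_mem hT
    obtain ⟨⟨v₀, w₀, hv₀⟩, hmpos⟩ := mem_posVals.1 hmT
    have hmM : m ≤ M := hv₀ ▸ hMub v₀ w₀
    have hmle : ∀ v w, 0 < C v w → m ≤ C v w := fun v w h =>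
      T.min'_le _ (mem_posVals.2 ⟨⟨v, w, rfl⟩, h⟩)
    set E : Matrix V V ℝ := Matrix.of fun v w => if v = w ∨ 0 < C v w then 1 else 0 with hE
    set C' : Matrix V V ℝ := C - m • (E - 1) with hC'
    have hEd : ∀ v, E v v = 1 := fun v => by simp [hE]
    have hC'd : ∀ v, C' v v = 0 := fun v => by
      simp [hC', hEd, Matrix.sub_apply, Matrix.smul_apply, Matrix.one_apply, hdiag]
    have hC'off : ∀ v w, v ≠ w → C' v w = max (C v w - m) 0 := by
      intro v w hvw
      by_cases h : 0 < C v w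
      · have : C' v w = C v w - m := by
          simp [hC', hE, Matrix.sub_apply, Matrix.smul_apply, Matrix.one_apply, hvw, h]
        rw [this, max_eq_left (by linarith [hmle v w h])]
      · have hz : C v w = 0 := le_antisymm (not_lt.1 h) (hnn v w)
        have : C' v w = 0 := by
          simp [hC', hE, Matrix.sub_apply, Matrix.smul_apply, Matrix.one_apply, hvw, h, hz]
        rw [this, hz, max_eq_right (by linarith)]
    have hsymm' : ∀ v w, C' v w = C' w v := by
      intro v w
      by_cases hvw : v = w
      · rw [hvw]
      · rw [hC'off v w hvw, hC'off w v (Ne.symm hvw), hsymm]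
    have hnn' : ∀ v w, 0 ≤ C' v w := by
      intro v w
      by_cases hvw : v = w
      · rw [hvw, hC'd]
      · rw [hC'off v w hvw]; exact le_max_right _ _
    have hGH' : ∀ x y z : V, x ≠ y → y ≠ z → x ≠ z →
        min (C' x y) (C' y z) ≤ C' x z := by
      intro x y z hxy hyz hxz
      rw [hC'off x y hxy, hC'off y z hyz, hC'off x z hxz]
      have h := hGH x y z hxy hyz hxz
      rcases le_total (C x y) (C y z) with hab | hab
      · rw [min_eq_left hab] at h
        rw [min_eq_left (max_le_max (by linarith) le_rfl)]
        exact max_le_max (by linarith) le_rfl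
      · rw [min_eq_right hab] at h
        rw [min_eq_right (max_le_max (by linarith) le_rfl)]
        exact max_le_max (by linarith) le_rfl
    have hMub' : ∀ v w, C' v w ≤ M - m := by
      intro v w
      by_cases hvw : v = w
      · rw [hvw, hC'd]; linarith
      · rw [hC'off v w hvw]
        exact max_le (by linarith [hMub v w]) (by linarith)
    have hsub : posVals C' ⊆ (T.erase m).image (· - m) := by
      intro a ha
      obtain ⟨⟨v, w, hvw⟩, hapos⟩ := mem_posVals.1 ha
      have hvne : v ≠ w := by
        intro h; rw [h, hC'd] at hvw; linarith
      rw [hC'off v w hvne] at hvw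
      have hCm : C v w - m = a := by
        rcases max_cases (C v w - m) (0:ℝ) with ⟨h1, _⟩ | ⟨h1, _⟩
        · rw [← hvw, h1]
        · rw [h1] at hvw; linarith
      have hCpos : 0 < C v w := by linarith
      refine Finset.mem_image.2 ⟨C v w,
        Finset.mem_erase.2 ⟨?_, mem_posVals.2 ⟨⟨v, w, rfl⟩, hCpos⟩⟩, hCm⟩
      intro h; rw [h] at hCm; linarith
    have hcard' : (posVals C').card < k := by
      calc (posVals C').card ≤ ((T.erase m).image (· - m)).card := Finset.card_le_card hsub
        _ ≤ (T.erase m).card := Finset.card_image_le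
        _ < T.card := Finset.card_erase_lt_of_mem hmT
        _ = k := hcard
    have hIH := IH _ hcard' C' (M - m) rfl hsymm' (fun v => hC'd v) hnn' hGH'
      (by linarith) hMub'
    have hEsymm : ∀ v w : V, (v = w ∨ 0 < C v w) ↔ (w = v ∨ 0 < C w v) := by
      intro v w
      rw [hsymm v w]
      constructor <;> (rintro (h | h); exacts [Or.inl h.symm, Or.inr h])
    letI s : Setoid V := ⟨fun v w => v = w ∨ 0 < C v w, ⟨fun v => Or.inl rfl,
      fun {v w} h => ((hEsymm v w).1 h),
      fun {v w z} h1 h2 => by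
        rcases h1 with h1 | h1
        · rwa [h1]
        · rcases h2 with h2 | h2
          · rw [← h2]; exact Or.inr h1
          · by_cases hvz : v = z
            · exact Or.inl hvz
            · have hvw : v ≠ w := fun h => by rw [h] at h1; simp [hdiag] at h1
              have hwz : w ≠ z := fun h => by rw [h] at h2; simp [hdiag] at h2
              refine Or.inr (lt_of_lt_of_le ?_ (hGH v w z hvw hwz hvz))
              exact lt_min h1 h2⟩⟩
    set r : V → V := fun v => (Quotient.mk s v).out with hrdef
    have hr : ∀ v w : V, r v = r w ↔ (v = w ∨ 0 < C v w) := by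
      intro v w
      constructor
      · intro h
        exact Quotient.exact (Quotient.out_inj.1 h)
      · intro h
        exact congrArg Quotient.out (Quotient.sound h)
    have hErE : ∀ v w, E v w = if r v = r w then 1 else 0 := by
      intro v w
      rw [hE]
      by_cases h : v = w ∨ 0 < C v w
      · simp only [Matrix.of_apply, if_pos h, if_pos ((hr v w).2 h)]
      · simp only [Matrix.of_apply, if_neg h, if_neg (fun hh => h ((hr v w).1 hh))]
    have hQE : (Q * E).trace ≤ (Fintype.card V : ℝ) := traceQE_le Q hQ r E hErE
    have htr : (Q * C).trace = (Q * C').trace + m * ((Q * E).trace - Q.trace) := by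
      have h : Q * C' = Q * C - m • (Q * E) + m • Q := by
        rw [hC', Matrix.mul_sub, Matrix.mul_smul, Matrix.mul_sub, Matrix.mul_one, smul_sub]
        abel
      rw [h]
      simp only [Matrix.trace_add, Matrix.trace_sub, Matrix.trace_smul, smul_eq_mul]
      ring
    have hstep : m * ((Q * E).trace - Q.trace) ≤ m * ((Fintype.card V : ℝ) - 1) :=
      mul_le_mul_of_nonneg_left (by linarith) hmpos.le
    rw [htr]
    nlinarith [hIH, hstep]

end Helpers

/-- The energy of a nonnegative symmetric matrix with zero diagonal whose
off-diagonal entries satisfy the Gomory-Hu triangle inequality is at most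
2(n−1)M, where M is the maximum entry. -/
theorem stmt_8 {V : Type*} [Fintype V] [DecidableEq V] (hcard : 1 < Fintype.card V)
    (C : Matrix V V ℝ) (hC : C.IsHermitian)
    (hdiag : ∀ v : V, C v v = 0) (hnn : ∀ v w : V, 0 ≤ C v w)
    (hGH : ∀ x y z : V, x ≠ y → y ≠ z → x ≠ z → min (C x y) (C y z) ≤ C x z)
    (M : ℝ) (hM : IsGreatest {t | ∃ v w : V, C v w = t} M) :
    ∑ i, |hC.eigenvalues i| ≤ 2 * ((Fintype.card V : ℝ) - 1) * M := by
  classical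
  set lam := hC.eigenvalues with hlam
  set U : Matrix V V ℝ := (hC.eigenvectorUnitary : Matrix V V ℝ) with hU
  have hUs : star U * U = 1 := Matrix.mem_unitaryGroup_iff'.mp (hC.eigenvectorUnitary).2
  have hUU : U * star U = 1 := Matrix.mem_unitaryGroup_iff.mp (hC.eigenvectorUnitary).2
  have hspec : C = U * Matrix.diagonal lam * star U := by
    have h := hC.spectral_theorem
    simpa [RCLike.ofReal_real_eq_id, Function.comp] using h
  have hsymm : ∀ v w, C v w = C w v := by
    intro v w
    have h := congrFun (congrFun hC w) v
    simpa [Matrix.conjTranspose_apply] using h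
  have hMub : ∀ v w, C v w ≤ M := fun v w => hM.2 ⟨v, w, rfl⟩
  have hM0 : 0 ≤ M := by
    obtain ⟨v, w, hvw⟩ := hM.1
    rw [← hvw]; exact hnn v w
  have hcard1 : (1:ℝ) ≤ (Fintype.card V : ℝ) - 1 := by
    have : (2:ℝ) ≤ (Fintype.card V : ℝ) := by exact_mod_cast hcard
    linarith
  have htrC : C.trace = 0 := by simp [Matrix.trace, Matrix.diag, hdiag]
  have hsum : ∑ i, lam i = 0 := by
    rw [← conj_trace U hUs lam, ← hspec, htrC]
  have habs : ∑ i, |lam i| = 2 * ∑ i, max (lam i) 0 := by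
    have h : ∀ i : V, |lam i| = 2 * max (lam i) 0 - lam i := by
      intro i
      rcases le_total 0 (lam i) with h | h
      · rw [abs_of_nonneg h, max_eq_left h]; ring
      · rw [abs_of_nonpos h, max_eq_right h]; ring
    rw [Finset.sum_congr rfl (fun i _ => h i), Finset.sum_sub_distrib, hsum, sub_zero,
      Finset.mul_sum]
  set p : V → ℝ := fun i => if 0 < lam i then 1 else 0 with hp
  have hmaxp : ∑ i, max (lam i) 0 = ∑ i, p i * lam i := by
    refine Finset.sum_congr rfl fun i _ => ?_
    by_cases h : 0 < lam i
    · simp [hp, h, max_eq_left h.le]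
    · simp [hp, h, max_eq_right (not_lt.1 h)]
  by_cases hPe : ∀ i : V, lam i ≤ 0
  · have : ∑ i, max (lam i) 0 = 0 := by
      rw [Finset.sum_eq_zero]
      intro i _
      rw [max_eq_right (hPe i)]
    rw [habs, this, mul_zero]
    have : (0:ℝ) ≤ 2 * ((Fintype.card V : ℝ) - 1) := by linarith
    exact mul_nonneg this hM0
  · push_neg at hPe
    obtain ⟨i₀, hi₀⟩ := hPe
    set Q : Matrix V V ℝ := U * Matrix.diagonal p * star U with hQdef
    have hQ : ∀ x : V → ℝ, x ⬝ᵥ Q *ᵥ x ≤ x ⬝ᵥ x := by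
      intro x
      exact conj_quad_le U hUU p (fun i => by simp only [hp]; split <;> norm_num) x
    have hQtr : 1 ≤ Q.trace := by
      rw [hQdef, conj_trace U hUs p]
      have h1 : p i₀ = 1 := by simp only [hp]; exact if_pos hi₀
      have h2 : ∀ i ∈ Finset.univ, (0:ℝ) ≤ p i := by
        intro i _; simp only [hp]; split <;> norm_num
      calc (1:ℝ) = p i₀ := h1.symm
        _ ≤ ∑ i, p i := Finset.single_le_sum h2 (Finset.mem_univ i₀)
    have hQC : (Q * C).trace = ∑ i, p i * lam i := by
      rw [hQdef]
      nth_rewrite 1 [hspec]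
      exact conj_mul_trace U hUs p lam
    have hfin := key_lemma Q hQ hQtr (posVals C).card C M rfl hsymm hdiag hnn hGH hM0 hMub
    rw [habs, hmaxp, ← hQC]
    calc 2 * (Q * C).trace ≤ 2 * (((Fintype.card V : ℝ) - 1) * M) := by linarith
      _ = 2 * ((Fintype.card V : ℝ) - 1) * M := by ring
end

section
/- Let C be a real nonnegative symmetric n×n matrix with zero diagonal whose off-diagonal entries satisfy the Gomory-Hu triangle inequality, and let M be its maximum entry. If the energy of C equals 2(n−1)M and M > 0, then C = M(J − I), where J is the all-ones matrix and I the identity. -/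
/-!
Let `t` be the smallest positive entry of `C`. Off the diagonal, `C = C' + t • E - t • 1`, where
`C'` has entries `max (C v w - t) 0` and `E` is the indicator matrix of the relation
`v = w ∨ 0 < C v w`. By the Gomory–Hu inequality this relation is an equivalence, so `E` is a Gram
matrix, hence positive semidefinite; and `C'` is again Gomory–Hu, with fewer distinct entries.
Induction therefore shows that `C + M • 1` is positive semidefinite, i.e. every eigenvalue of `C`
is at least `-M`.

With `tr C = 0` and energy `2 (n - 1) M`, the spectrum `-M, …, -M, (n - 1) M` is extremal, and a
quadratic lower bound for `x ^ 2` on `[-M, ∞)` that is tight at both of these points gives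
`∑ λᵢ ^ 2 ≥ n (n - 1) M ^ 2`. But `∑ λᵢ ^ 2 = ∑ C v w ^ 2 ≤ n (n - 1) M ^ 2`, with equality only if
every off-diagonal entry equals `M`.
-/

open Matrix Finset
open scoped ComplexOrder

namespace Matrix

variable {n 𝕜 : Type*} [Fintype n] [RCLike 𝕜]

lemma posSemidef_of_equivalence_s9 {r : n → n → Prop} [DecidableRel r] (hr : Equivalence r) :
    (of fun v w => if r v w then (1 : 𝕜) else 0).PosSemidef := by
  classical
  let s : Setoid n := ⟨r, hr⟩
  let B : Matrix n (Quotient s) 𝕜 := of fun v c => if Quotient.mk s v = c then 1 else 0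
  convert posSemidef_self_mul_conjTranspose B using 1
  ext v w
  simp [B, mul_apply, Quotient.eq, s, eq_comm (a := Quotient.mk s w)]

variable [DecidableEq n] {A : Matrix n n 𝕜}

lemma IsHermitian.neg_le_eigenvalues (hA : A.IsHermitian) {c : ℝ}
    (h : (A + c • (1 : Matrix n n 𝕜)).PosSemidef) (i : n) : -c ≤ hA.eigenvalues i := by
  have hq := h.dotProduct_mulVec_nonneg (hA.eigenvectorBasis i)
  have hu : star ⇑(hA.eigenvectorBasis i) ⬝ᵥ ⇑(hA.eigenvectorBasis i) = 1 := by
    rw [dotProduct_comm, ← EuclideanSpace.inner_eq_star_dotProduct, inner_self_eq_norm_sq_to_K,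
      hA.eigenvectorBasis.orthonormal.1 i]
    simp
  rw [add_mulVec, dotProduct_add, smul_mulVec, one_mulVec, dotProduct_smul, hu] at hq
  have hre := (RCLike.nonneg_iff.mp hq).1
  rw [map_add, RCLike.smul_re, RCLike.one_re, ← hA.eigenvalues_eq] at hre
  linarith

lemma IsHermitian.sum_sq_eigenvalues (hA : A.IsHermitian) :
    ∑ i, hA.eigenvalues i ^ 2 = ∑ i, ∑ j, ‖A i j‖ ^ 2 := by
  have htrace : (A * Aᴴ).trace = ∑ i, (hA.eigenvalues i : 𝕜) ^ 2 := by
    conv_lhs => rw [hA.eq, hA.spectral_theorem, ← map_mul]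
    rw [Unitary.conjStarAlgAut_apply, trace_mul_cycle, Unitary.coe_star_mul_self, one_mul,
      diagonal_mul_diagonal, trace_diagonal]
    simp [sq]
  apply RCLike.ofReal_injective (K := 𝕜)
  push_cast
  rw [← htrace]
  simp [trace, mul_apply, RCLike.mul_conj]

end Matrix

lemma le_sum_sq_of_sum_abs_eq {ι : Type*} [Fintype ι] {μ : ι → ℝ} {M : ℝ} (hM : 0 ≤ M)
    (hn : 2 ≤ Fintype.card ι) (hμ : ∀ i, -M ≤ μ i) (hsum : ∑ i, μ i = 0)
    (habs : ∑ i, |μ i| = 2 * ((Fintype.card ι : ℝ) - 1) * M) :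
    Fintype.card ι * ((Fintype.card ι : ℝ) - 1) * M ^ 2 ≤ ∑ i, μ i ^ 2 := by
  set m : ℝ := Fintype.card ι - 1
  have hm : 1 ≤ m := by
    have : (2 : ℝ) ≤ Fintype.card ι := by exact_mod_cast hn
    linarith
  -- tight at `x = -M` and at `x = m * M`
  have key : ∀ i, -((m - 1) ^ 2 * M / 2) * μ i + (m + 1) ^ 2 * M / 2 * |μ i| - m ^ 2 * M ^ 2
      ≤ μ i ^ 2 := by
    intro i
    rcases le_total 0 (μ i) with h | h
    · rw [abs_of_nonneg h]
      nlinarith [sq_nonneg (μ i - m * M)]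
    · rw [abs_of_nonpos h]
      nlinarith [mul_nonneg (by linarith [hμ i] : 0 ≤ μ i + M)
        (by nlinarith [hμ i, mul_nonneg (by nlinarith : (0 : ℝ) ≤ m ^ 2 - 1) hM] :
          0 ≤ μ i + m ^ 2 * M)]
  have hsummed := sum_le_sum fun i (_ : i ∈ univ) => key i
  simp only [sum_sub_distrib, sum_add_distrib, ← mul_sum, hsum, habs, sum_const, card_univ,
    nsmul_eq_mul] at hsummed
  have hn' : (Fintype.card ι : ℝ) = m + 1 := by ring
  rw [hn'] at hsummed ⊢
  nlinarith

lemma eq_ite_of_le_sum_sq {V : Type*} [Fintype V] [DecidableEq V] {C : Matrix V V ℝ} {M : ℝ}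
    (hdiag : ∀ v, C v v = 0) (hnn : ∀ v w, 0 ≤ C v w) (hM : ∀ v w, C v w ≤ M)
    (hsq : Fintype.card V * ((Fintype.card V : ℝ) - 1) * M ^ 2 ≤ ∑ v, ∑ w, C v w ^ 2)
    (v w : V) : C v w = if v = w then 0 else M := by
  have hle : ∀ v w, C v w ^ 2 ≤ if v = w then 0 else M ^ 2 := by
    intro v w
    split_ifs with h
    · simp [h, hdiag]
    · exact pow_le_pow_left₀ (hnn v w) (hM v w) 2
  have htotal : ∑ v : V, ∑ w : V, (if v = w then 0 else M ^ 2) =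
      Fintype.card V * ((Fintype.card V : ℝ) - 1) * M ^ 2 := by
    cases isEmpty_or_nonempty V
    · simp
    · simp [sum_ite, filter_ne, Nat.cast_pred Fintype.card_pos]
      ring
  have heq := (sum_eq_sum_iff_of_le (s := univ ×ˢ univ) (f := fun p : V × V => C p.1 p.2 ^ 2)
    fun p _ => hle p.1 p.2).mp <| by
      simp only [sum_product]
      exact le_antisymm (sum_le_sum fun v _ => sum_le_sum fun w _ => hle v w) (htotal ▸ hsq)
  have hvw := heq (v, w) (mem_product.mpr ⟨mem_univ v, mem_univ w⟩)
  split_ifs at hvw ⊢ with h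
  · exact h ▸ hdiag v
  · exact (pow_left_inj₀ (hnn v w) ((hnn v w).trans (hM v w)) two_ne_zero).mp hvw

section GomoryHu

variable {V : Type*} {C : Matrix V V ℝ}

def IsGomoryHu (C : Matrix V V ℝ) : Prop :=
  ∀ x y z, x ≠ y → y ≠ z → x ≠ z → min (C x y) (C y z) ≤ C x z

lemma IsGomoryHu.map (hC : IsGomoryHu C) {f : ℝ → ℝ} (hf : Monotone f) :
    IsGomoryHu (C.map f) := fun x y z hxy hyz hxz => by
  simpa only [map_apply, ← hf.map_min] using hf (hC x y z hxy hyz hxz)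

lemma IsGomoryHu.equivalence_eq_or_lt (hC : IsGomoryHu C) (hsymm : C.IsHermitian) (s : ℝ) :
    Equivalence fun v w => v = w ∨ s < C v w where
  refl _ := .inl rfl
  symm {v w} := by
    rintro (rfl | h)
    · exact .inl rfl
    · exact .inr (by simpa using (hsymm.apply w v).symm ▸ h)
  trans {u v w} := by
    rintro (rfl | huv) (rfl | hvw)
    · exact .inl rfl
    · exact .inr hvw
    · exact .inr huv
    by_cases hu : u = v; · exact .inr (hu ▸ hvw)
    by_cases hv : v = w; · exact .inr (hv ▸ huv)
    by_cases hw : u = w; · exact .inl hw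
    exact .inr ((lt_min huv hvw).trans_le (hC u v w hu hv hw))

lemma eq_map_add_smul_sub_one [DecidableEq V] (hdiag : ∀ v, C v v = 0) (hnn : ∀ v w, 0 ≤ C v w)
    {t : ℝ} (ht : 0 ≤ t) (hmin : ∀ v w, 0 < C v w → t ≤ C v w) :
    C = C.map (fun x => max (x - t) 0) +
      t • (of (fun v w => if v = w ∨ 0 < C v w then 1 else 0) - 1) := by
  ext v w
  by_cases hvw : v = w
  · subst hvw
    simp [hdiag, ht]
  rcases (hnn v w).lt_or_eq with hpos | hzero
  · simp [hvw, hpos, hmin v w hpos]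
  · simp [hvw, ← hzero, ht]

section entrySet

variable [Fintype V]

noncomputable def entrySet (C : Matrix V V ℝ) : Finset ℝ :=
  univ.image fun p : V × V => C p.1 p.2

lemma apply_mem_entrySet (v w : V) : C v w ∈ entrySet C :=
  mem_image_of_mem _ (mem_univ (v, w))

lemma entrySet_map (f : ℝ → ℝ) : entrySet (C.map f) = (entrySet C).image f := by
  simp only [entrySet, image_image]
  rfl

lemma card_entrySet_map_lt {f : ℝ → ℝ} {a b : ℝ} (ha : a ∈ entrySet C) (hb : b ∈ entrySet C)
    (hab : a ≠ b) (hf : f a = f b) : (entrySet (C.map f)).card < (entrySet C).card := by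
  rw [entrySet_map]
  exact card_image_le.lt_of_ne fun h => hab (card_image_iff.mp h ha hb hf)

end entrySet

theorem IsGomoryHu.posSemidef_add_smul_one [Fintype V] [DecidableEq V] (hGH : IsGomoryHu C)
    (hC : C.IsHermitian) (hdiag : ∀ v, C v v = 0) (hnn : ∀ v w, 0 ≤ C v w) {M : ℝ}
    (hM : ∀ v w, C v w ≤ M) (hM0 : 0 ≤ M) : (C + M • 1).PosSemidef := by
  induction hk : (entrySet C).card using Nat.strong_induction_on generalizing C M with
  | _ k ih =>
  by_cases hpos : ∃ v w, 0 < C v w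
  swap
  · have hC0 : C = 0 := by
      push Not at hpos
      ext v w
      exact le_antisymm (hpos v w) (hnn v w)
    simpa [hC0] using PosSemidef.one.smul hM0
  obtain ⟨⟨a, b⟩, hab, hmin⟩ := exists_min_image (univ.filter fun p : V × V => 0 < C p.1 p.2)
    (fun p => C p.1 p.2) (let ⟨v, w, h⟩ := hpos; ⟨(v, w), by simpa using h⟩)
  simp only [mem_filter, mem_univ, true_and, Prod.forall] at hab hmin
  set f : ℝ → ℝ := fun x => max (x - C a b) 0
  have hf : Monotone f := fun x y h => max_le_max (by linarith) le_rfl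
  have hE := @posSemidef_of_equivalence_s9 _ ℝ _ _ _ (fun _ _ => instDecidableOr)
    (hGH.equivalence_eq_or_lt hC 0)
  have hIH : (C.map f + (M - C a b) • 1).PosSemidef := by
    refine ih _ ?_ (hGH.map hf) (hC.map f fun _ => rfl) (fun v => by simp [f, hdiag, hab.le])
      (fun v w => le_max_right _ _)
      (fun v w => max_le (by linarith [hM v w]) (by linarith [hM a b]))
      (by linarith [hM a b]) rfl
    exact hk ▸ card_entrySet_map_lt (apply_mem_entrySet a b) (apply_mem_entrySet a a)
      (by rw [hdiag]; exact hab.ne') (by simp [f, hdiag, hab.le])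
  rw [eq_map_add_smul_sub_one hdiag hnn hab.le hmin]
  convert hIH.add (hE.smul hab.le) using 1
  module

end GomoryHu

theorem stmt_9_general {V : Type*} [Fintype V] [DecidableEq V] (hcard : 1 < Fintype.card V)
    (C : Matrix V V ℝ) (hC : C.IsHermitian)
    (hdiag : ∀ v : V, C v v = 0) (hnn : ∀ v w : V, 0 ≤ C v w)
    (hGH : ∀ x y z : V, x ≠ y → y ≠ z → x ≠ z → min (C x y) (C y z) ≤ C x z)
    (M : ℝ) (hM : IsGreatest {t | ∃ v w : V, C v w = t} M)
    (henergy : ∑ i, |hC.eigenvalues i| = 2 * ((Fintype.card V : ℝ) - 1) * M) :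
    ∀ v w : V, C v w = if v = w then 0 else M := by
  have hle : ∀ v w, C v w ≤ M := fun v w => hM.2 ⟨v, w, rfl⟩
  obtain ⟨v₀⟩ : Nonempty V := Fintype.card_pos_iff.mp (by omega)
  have hM0 : 0 ≤ M := (hnn v₀ v₀).trans (hle v₀ v₀)
  have heig : ∀ i, -M ≤ hC.eigenvalues i :=
    hC.neg_le_eigenvalues (IsGomoryHu.posSemidef_add_smul_one hGH hC hdiag hnn hle hM0)
  have htrace : ∑ i, hC.eigenvalues i = 0 := by
    simpa [trace, hdiag] using hC.trace_eq_sum_eigenvalues.symm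
  have hsq := le_sum_sq_of_sum_abs_eq hM0 hcard heig htrace henergy
  simp only [hC.sum_sq_eigenvalues, Real.norm_eq_abs, sq_abs] at hsq
  exact eq_ite_of_le_sum_sq hdiag hnn hle hsq

/-- If the energy of such a matrix attains the bound 2(n−1)M with M > 0, then
the matrix equals M(J − I). -/
theorem stmt_9 {V : Type*} [Fintype V] [DecidableEq V] (hcard : 1 < Fintype.card V)
    (C : Matrix V V ℝ) (hC : C.IsHermitian)
    (hdiag : ∀ v : V, C v v = 0) (hnn : ∀ v w : V, 0 ≤ C v w)
    (hGH : ∀ x y z : V, x ≠ y → y ≠ z → x ≠ z → min (C x y) (C y z) ≤ C x z)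
    (M : ℝ) (hM : IsGreatest {t | ∃ v w : V, C v w = t} M) (hMpos : 0 < M)
    (henergy : ∑ i, |hC.eigenvalues i| = 2 * ((Fintype.card V : ℝ) - 1) * M) :
    ∀ v w : V, C v w = if v = w then 0 else M :=
  stmt_9_general hcard C hC hdiag hnn hGH M hM henergy
end

section
/- Let C be a real symmetric V×V matrix whose off-diagonal entries satisfy the Gomory-Hu triangle inequality, and for v ∈ V let m(v) = max_{w ≠ v} c_{vw}. Then the relation x ∼ y defined by (x = y, or m(x) = m(y) = c_{xy}) is an equivalence relation on V. -/
/-- The relation `x = y or m(x) = m(y) = C x y`, where m(v) is the maximum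
off-diagonal entry of row v, is an equivalence relation. -/
theorem stmt_10 {V : Type*} [Fintype V] (hcard : 1 < Fintype.card V)
    (C : Matrix V V ℝ) (hsymm : C.IsSymm)
    (hGH : ∀ x y z : V, x ≠ y → y ≠ z → x ≠ z → min (C x y) (C y z) ≤ C x z)
    (m : V → ℝ) (hm : ∀ v : V, IsGreatest {t | ∃ w : V, w ≠ v ∧ C v w = t} (m v)) :
    Equivalence (fun x y : V => x = y ∨ (m x = m y ∧ m x = C x y)) := by
  have hC : ∀ a b : V, C a b = C b a := fun a b =>
    hsymm.apply b a
  constructor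
  · intro x; exact Or.inl rfl
  · rintro x y (rfl | ⟨h1, h2⟩)
    · exact Or.inl rfl
    · exact Or.inr ⟨h1.symm, by rw [← h1, h2, hC]⟩
  · rintro x y z hxy hyz
    by_cases hxy' : x = y
    · subst hxy'; exact hyz
    by_cases hyz' : y = z
    · subst hyz'; exact hxy
    rcases hxy with rfl | ⟨h1, h2⟩
    · exact absurd rfl hxy'
    rcases hyz with rfl | ⟨h3, h4⟩
    · exact absurd rfl hyz'
    by_cases hxz : x = z
    · exact Or.inl hxz
    refine Or.inr ⟨h1.trans h3, le_antisymm ?_ ?_⟩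
    · have := hGH x y z hxy' hyz' hxz
      rwa [← h2, ← h4, ← h1, min_self] at this
    · exact (hm x).2 ⟨z, Ne.symm hxz, rfl⟩
end

section
/- Let C be a real symmetric V×V matrix whose off-diagonal entries satisfy the Gomory-Hu triangle inequality, and define x ∼ y by (x = y or m(x) = m(y) = c_{xy}) where m(v) = max_{w≠v} c_{vw}. If x₁ ∼ x₂ and y₁ ∼ y₂ with x₁ ≁ y₁, then c_{x₁y₁} = c_{x₂y₂}; that is, off-diagonal entries between distinct equivalence classes depend only on the classes. -/
/-- Off-diagonal entries between distinct equivalence classes of the relation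
`x ∼ y ↔ x = y ∨ m(x) = m(y) = C x y` depend only on the classes. -/
theorem stmt_11 {V : Type*} [Fintype V] (hcard : 1 < Fintype.card V)
    (C : Matrix V V ℝ) (hsymm : C.IsSymm)
    (hGH : ∀ x y z : V, x ≠ y → y ≠ z → x ≠ z → min (C x y) (C y z) ≤ C x z)
    (m : V → ℝ) (hm : ∀ v : V, IsGreatest {t | ∃ w : V, w ≠ v ∧ C v w = t} (m v))
    (x₁ x₂ y₁ y₂ : V)
    (hx : x₁ = x₂ ∨ (m x₁ = m x₂ ∧ m x₁ = C x₁ x₂))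
    (hy : y₁ = y₂ ∨ (m y₁ = m y₂ ∧ m y₁ = C y₁ y₂))
    (hxy : ¬ (x₁ = y₁ ∨ (m x₁ = m y₁ ∧ m x₁ = C x₁ y₁))) :
    C x₁ y₁ = C x₂ y₂ := by
  have hub : ∀ v w : V, w ≠ v → C v w ≤ m v := fun v w hw => (hm v).2 ⟨w, hw, rfl⟩
  have hsy : ∀ a b : V, C a b = C b a := fun a b => by
    exact hsymm.apply b a
  -- Key lemma: if x ~ x' nontrivially and x ≁ y then C x y = C x' y.
  have lemA : ∀ x x' y : V, x ≠ x' → m x = m x' → m x = C x x' → y ≠ x →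
      ¬(m x = m y ∧ m x = C x y) → C x y = C x' y := by
    intro x x' y hxx' hmm hmc hyx hns
    have hyx' : y ≠ x' := by
      rintro rfl
      exact hns ⟨hmm, hmc⟩
    have hx'x : C x' x = m x := by rw [hsy x' x, ← hmc]
    have h1 : C x y ≤ m x := hub x y hyx
    have h2 : C x' y ≤ m x' := hub x' y hyx'
    have ht1 : min (C x' x) (C x y) ≤ C x' y :=
      hGH x' x y (Ne.symm hxx') (Ne.symm hyx) (Ne.symm hyx')
    rcases eq_or_lt_of_le h1 with heq | hlt
    · -- C x y = m x, then C x' y is squeezed to m x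
      rw [hx'x, ← heq, min_self] at ht1
      rw [← hmm] at h2
      linarith
    · -- C x y < m x
      have hA : C x y ≤ C x' y := by
        rw [hx'x, min_eq_right h1] at ht1
        exact ht1
      have ht2 : min (C y x') (C x' x) ≤ C y x :=
        hGH y x' x hyx' (Ne.symm hxx') hyx
      have hB : C x' y ≤ C x y := by
        rw [hx'x, hsy y x] at ht2
        rw [hsy x' y]
        rcases le_total (C y x') (m x) with h | h
        · rwa [min_eq_left h] at ht2
        · rw [min_eq_right h] at ht2; linarith
      linarith
  have hx1y1 : x₁ ≠ y₁ := fun h => hxy (Or.inl h)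
  have hns1 : ¬(m x₁ = m y₁ ∧ m x₁ = C x₁ y₁) := fun h => hxy (Or.inr h)
  -- x₂ is also not related to y₁
  have hy1x2 : y₁ ≠ x₂ := by
    rintro rfl
    rcases hx with h | ⟨h1, h2⟩
    · exact hx1y1 h
    · exact hns1 ⟨h1, h2⟩
  have hns2 : ¬(m y₁ = m x₂ ∧ m y₁ = C y₁ x₂) := by
    rintro ⟨g1, g2⟩
    rcases hx with rfl | ⟨h1, h2⟩
    · exact hns1 ⟨g1.symm, by rw [← g1, g2, hsy y₁ x₁]⟩
    · -- transitivity: x₁ ~ x₂ ~ y₁ gives x₁ ~ y₁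
      have h12 : x₁ ≠ x₂ := by
        rintro rfl
        exact hns1 ⟨g1.symm, by rw [← g1, g2, hsy y₁ x₁]⟩
      have ht : min (C x₁ x₂) (C x₂ y₁) ≤ C x₁ y₁ :=
        hGH x₁ x₂ y₁ h12 (Ne.symm hy1x2) hx1y1
      have hcx2y1 : C x₂ y₁ = m x₁ := by
        rw [hsy x₂ y₁, ← g2, g1, ← h1]
      rw [← h2, hcx2y1, min_self] at ht
      have hle : C x₁ y₁ ≤ m x₁ := hub x₁ y₁ (Ne.symm hx1y1)
      exact hns1 ⟨by rw [h1, g1.symm], by linarith⟩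
  have step1 : C x₁ y₁ = C x₂ y₁ := by
    by_cases h : x₁ = x₂
    · rw [h]
    · rcases hx with h' | ⟨h1, h2⟩
      · exact absurd h' h
      · exact lemA x₁ x₂ y₁ h h1 h2 (Ne.symm hx1y1) hns1
  have step2 : C x₂ y₁ = C x₂ y₂ := by
    by_cases h : y₁ = y₂
    · rw [h]
    · rcases hy with h' | ⟨g1, g2⟩
      · exact absurd h' h
      · have := lemA y₁ y₂ x₂ h g1 g2 (Ne.symm hy1x2) hns2
        rw [hsy x₂ y₁, hsy x₂ y₂]
        exact this
  rw [step1, step2]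
end

section
/- Let d : V × V → ℝ be an ultrametric on a finite set V with |V| ≥ 2, and D its distance matrix. Two distinct points x, y ∈ V are mutually nearest (d(x,y) ≤ d(x,z) and d(x,y) ≤ d(z,y) for every z ∈ V \ {x,y}) if and only if e_x − e_y is an eigenvector of D with eigenvalue −d(x,y). -/
/-- For an ultrametric d on V, two distinct points x, y are mutually nearest if
and only if `e_x − e_y` is an eigenvector of the distance matrix with eigenvalue
`−d x y`. -/
theorem stmt_12 {V : Type*} [Fintype V] [DecidableEq V] (hcard : 1 < Fintype.card V)
    (d : V → V → ℝ) (hsymm : ∀ x y : V, d x y = d y x)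
    (hzero : ∀ x y : V, d x y = 0 ↔ x = y) (hnn : ∀ x y : V, 0 ≤ d x y)
    (hstrong : ∀ x y z : V, d x z ≤ max (d x y) (d y z))
    (x y : V) (hxy : x ≠ y) :
    (∀ z : V, z ≠ x → z ≠ y → d x y ≤ d x z ∧ d x y ≤ d z y) ↔
      (Matrix.of d).mulVec (Pi.single x 1 - Pi.single y 1) =
        (-(d x y)) • (Pi.single x 1 - Pi.single y 1) := by
  have key : ∀ v, ((Matrix.of d).mulVec (Pi.single x 1 - Pi.single y 1)) v
      = d v x - d v y := by
    intro v
    simp [Matrix.mulVec, dotProduct, Pi.single_apply, mul_sub,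
      Finset.sum_sub_distrib, mul_ite]
  have hdxx : d x x = 0 := (hzero x x).mpr rfl
  have hdyy : d y y = 0 := (hzero y y).mpr rfl
  constructor
  · intro h
    funext v
    rw [key v]
    by_cases hvx : v = x
    · rw [hvx]
      simp [hdxx, Pi.single_apply, hxy]
    by_cases hvy : v = y
    · rw [hvy]
      simp [hdyy, Pi.single_apply, Ne.symm hxy, hsymm y x]
    · have ⟨h1, h2⟩ := h v hvx hvy
      -- show d v x = d v y
      have heq : d v x = d v y := by
        rcases lt_trichotomy (d v x) (d v y) with hlt | he | hgt
        · exfalso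
          have := hstrong v x y  -- d v y ≤ max (d v x) (d x y)
          have : d v y ≤ max (d v x) (d x y) := hstrong v x y
          have hxz : d x y ≤ d v x := by
            calc d x y ≤ d x v := h1
            _ = d v x := hsymm x v
          have : d v y ≤ d v x := le_trans this (by simp [max_le_iff, hxz, le_refl])
          linarith
        · exact he
        · exfalso
          have : d v x ≤ max (d v y) (d y x) := hstrong v y x
          have hxz : d y x ≤ d v y := by
            calc d y x = d x y := hsymm y x
            _ ≤ d v y := h2
          have : d v x ≤ d v y := le_trans this (by simp [max_le_iff, hxz, le_refl])
          linarith
      simp [Pi.single_apply, hvx, hvy, heq]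
  · intro h z hzx hzy
    have hz := congrFun h z
    rw [key z] at hz
    simp [Pi.single_apply, hzx, hzy] at hz
    -- hz : d z x = d z y (in some form)
    have heq : d z x = d z y := by linarith
    constructor
    · have : d x y ≤ max (d x z) (d z y) := hstrong x z y
      rw [← heq, hsymm z x] at this
      simpa using this
    · have : d x y ≤ max (d x z) (d z y) := hstrong x z y
      rw [hsymm x z, heq] at this
      simpa using this
end

section
/- Let d be an ultrametric on a finite set V with n = |V| ≥ 2, D its distance matrix, m = min_{x≠y} d(x,y) and M = max_{x≠y} d(x,y). Then the smallest eigenvalue λ_n(D) of D satisfies λ_n(D) ≥ n(m−M)/2 − m if n is even, and λ_n(D) ≥ (n·m − √(m² + (n²−1)M²))/2 − m if n is odd. -/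
/-!
If `(x₀, y₀)` realises the diameter `r` of a finite ultrametric space, the ball
`{x | d x x₀ < r}` and its complement are at constant distance `r`. Splitting recursively along
this hierarchy gives `vᵀ D v ≥ m ((∑ v)² - ∑ v²) - 2 (M - m) p q`, where `p` and `q` are the
sums of the positive and negative parts of `v`. Cauchy–Schwarz on the supports of `v⁺` and `v⁻`,
of sizes `k` and `l ≤ n - k`, then bounds the Rayleigh quotient of `D + m I` below by the least
eigenvalue `(n m - √(n² m² + 4 k (n - k) (M² - m²))) / 2` of the `2 × 2` matrix
`[[k m, -M √(k (n - k))], [-M √(k (n - k)), (n - k) m]]`; over the integers, `k (n - k)` is at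
most `n² / 4`, and at most `(n² - 1) / 4` when `n` is odd.
-/

open Finset

structure IsUltrametric {V : Type*} (d : V → V → ℝ) : Prop where
  symm : ∀ x y, d x y = d y x
  self : ∀ x, d x x = 0
  pos : ∀ x y, x ≠ y → 0 < d x y
  le_max : ∀ x y z, d x z ≤ max (d x y) (d y z)

theorem sub_mul_sub_le_two_mul {m M c t w : ℝ} (hmc : m ≤ c) (hcM : c ≤ M) (ht : |t| ≤ w) :
    (M - m) * (t - w) ≤ 2 * (c - m) * t := by
  rcases le_total 0 t with h | h
  · nlinarith [le_abs_self t]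
  · nlinarith [neg_abs_le t]

theorem mul_add_le_of_sq_le_mul {k l m M c p q Np Nq : ℝ} (hk : 0 ≤ k) (hl : 0 ≤ l) (hm : 0 ≤ m)
    (hc : c ≤ 0) (hkl : k * l * M ^ 2 ≤ (k * m - c) * (l * m - c))
    (hNp : 0 ≤ Np) (hNq : 0 ≤ Nq) (hp : p ^ 2 ≤ k * Np) (hq : q ^ 2 ≤ l * Nq) :
    c * (Np + Nq) ≤ m * (p ^ 2 + q ^ 2) - 2 * M * p * q := by
  rcases hk.eq_or_lt with rfl | hk
  · obtain rfl : p = 0 := by nlinarith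
    nlinarith
  rcases hl.eq_or_lt with rfl | hl
  · obtain rfl : q = 0 := by nlinarith
    nlinarith
  have hkm : 0 ≤ k * m - c := by nlinarith
  have hlm : 0 ≤ l * m - c := by nlinarith
  have hAMGM : 2 * (k * l * M * (p * q)) ≤ l * (k * m - c) * p ^ 2 + k * (l * m - c) * q ^ 2 := by
    refine two_mul_le_add_of_sq_le_mul (by positivity) (by positivity) ?_
    linear_combination mul_le_mul_of_nonneg_left hkl (by positivity : 0 ≤ k * l * (p * q) ^ 2)
  have hNp' : k * l * c * Np ≤ l * c * p ^ 2 := by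
    nlinarith [mul_nonpos_of_nonneg_of_nonpos hl.le hc]
  have hNq' : k * l * c * Nq ≤ k * c * q ^ 2 := by
    nlinarith [mul_nonpos_of_nonneg_of_nonpos hk.le hc]
  refine le_of_mul_le_mul_left ?_ (mul_pos hk hl)
  linear_combination hAMGM + hNp' + hNq'

theorem mul_sq_le_of_sq_sub_eq {n m M K k c : ℝ} (hmM : m ^ 2 ≤ M ^ 2) (hkK : k * (n - k) ≤ K)
    (hc : c ^ 2 - n * m * c = K * (M ^ 2 - m ^ 2)) :
    k * (n - k) * M ^ 2 ≤ (k * m - c) * ((n - k) * m - c) := by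
  nlinarith [mul_le_mul_of_nonneg_right hkK (sub_nonneg.2 hmM)]

theorem mul_sub_le_of_odd {n : ℕ} (hn : Odd n) (k : ℕ) :
    (k : ℝ) * (n - k) ≤ ((n : ℝ) ^ 2 - 1) / 4 := by
  obtain ⟨t, rfl⟩ := hn
  push_cast
  rcases le_or_gt k t with h | h
  · have h' : (k : ℝ) ≤ t := Nat.cast_le.2 h
    nlinarith
  · have h' : (t : ℝ) + 1 ≤ k := by exact_mod_cast h
    nlinarith

theorem posPart_sq_add_negPart_sq (a : ℝ) : a⁺ ^ 2 + a⁻ ^ 2 = a ^ 2 := by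
  rcases le_total 0 a with h | h
  · simp [posPart_of_nonneg h, negPart_eq_zero.2 h]
  · simp [posPart_eq_zero.2 h, negPart_of_nonpos h]

section Sums

variable {V : Type*}

theorem sum_sum_mul_eq_add_of_cross_eq [DecidableEq V] {d : V → V → ℝ}
    (hsymm : ∀ x y, d x y = d y x) (v : V → ℝ) {s A : Finset V} (hA : A ⊆ s) {c : ℝ}
    (hc : ∀ x ∈ A, ∀ y ∈ s \ A, d x y = c) :
    ∑ x ∈ s, ∑ y ∈ s, d x y * v x * v y =
      ∑ x ∈ A, ∑ y ∈ A, d x y * v x * v y + ∑ x ∈ s \ A, ∑ y ∈ s \ A, d x y * v x * v y +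
        2 * c * ((∑ x ∈ A, v x) * ∑ y ∈ s \ A, v y) := by
  have hcross : ∑ x ∈ A, ∑ y ∈ s \ A, d x y * v x * v y =
      c * ((∑ x ∈ A, v x) * ∑ y ∈ s \ A, v y) := by
    rw [sum_mul_sum, mul_sum]
    refine sum_congr rfl fun x hx => ?_
    rw [mul_sum]
    exact sum_congr rfl fun y hy => by rw [hc x hx y hy]; ring
  have hcross' : ∑ x ∈ s \ A, ∑ y ∈ A, d x y * v x * v y =
      ∑ x ∈ A, ∑ y ∈ s \ A, d x y * v x * v y := by
    rw [sum_comm]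
    exact sum_congr rfl fun x _ => sum_congr rfl fun y _ => by rw [hsymm]; ring
  simp only [← sum_sdiff hA, sum_add_distrib]
  rw [hcross', hcross]
  ring

variable [Fintype V]

theorem sum_sum_mul_eq_of_mulVec_eq {d : V → V → ℝ} {μ : ℝ} {v : V → ℝ}
    (hμ : (Matrix.of d).mulVec v = μ • v) :
    ∑ x, ∑ y, d x y * v x * v y = μ * ∑ x, v x ^ 2 := by
  have h := congrArg (v ⬝ᵥ ·) hμ
  simp only [Matrix.mulVec, dotProduct, Matrix.of_apply, mul_sum, Pi.smul_apply, smul_eq_mul] at h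
  rw [mul_sum]
  convert h using 2 with x
  · exact sum_congr rfl fun y _ => by ring
  · ring

theorem sum_sq_pos_of_ne_zero {v : V → ℝ} (hv : v ≠ 0) : 0 < ∑ x, v x ^ 2 := by
  obtain ⟨x, hx⟩ := Function.ne_iff.1 hv
  exact (sq_pos_of_ne_zero hx).trans_le (single_le_sum (fun i _ => sq_nonneg (v i)) (mem_univ x))

theorem sq_sum_le_card_support_mul_sum_sq (f : V → ℝ) :
    (∑ x, f x) ^ 2 ≤ #{x | f x ≠ 0} * ∑ x, f x ^ 2 := by
  rw [← sum_filter_ne_zero]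
  refine sq_sum_le_card_mul_sum_sq.trans (mul_le_mul_of_nonneg_left ?_ (Nat.cast_nonneg _))
  exact sum_le_sum_of_subset_of_nonneg (filter_subset _ _) fun x _ _ => sq_nonneg (f x)

theorem card_support_posPart_add_card_support_negPart_le (v : V → ℝ) :
    #{x | (v x)⁺ ≠ 0} + #{x | (v x)⁻ ≠ 0} ≤ Fintype.card V := by
  classical
  rw [← card_union_of_disjoint]
  · exact card_le_univ _
  · refine disjoint_filter.2 fun x _ hpos hneg => hpos (posPart_eq_zero.2 ?_)
    by_contra! h
    exact hneg (negPart_eq_zero.2 h.le)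

theorem mul_sum_sq_le_posPart_negPart {m M c : ℝ} (hm : 0 ≤ m) (hc : c ≤ 0)
    (hkc : ∀ k : ℕ, k * (Fintype.card V - k) * M ^ 2 ≤
      (k * m - c) * ((Fintype.card V - k) * m - c)) (v : V → ℝ) :
    c * ∑ x, v x ^ 2 ≤
      m * ((∑ x, (v x)⁺) ^ 2 + (∑ x, (v x)⁻) ^ 2) - 2 * M * (∑ x, (v x)⁺) * ∑ x, (v x)⁻ := by
  set k := #{x | (v x)⁺ ≠ 0}
  set l := #{x | (v x)⁻ ≠ 0}
  have hln : (l : ℝ) ≤ Fintype.card V - k := by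
    rw [le_sub_iff_add_le', ← Nat.cast_add]
    exact Nat.cast_le.2 (card_support_posPart_add_card_support_negPart_le v)
  have hq : (∑ x, (v x)⁻) ^ 2 ≤ (Fintype.card V - k) * ∑ x, (v x)⁻ ^ 2 :=
    (sq_sum_le_card_support_mul_sum_sq _).trans
      (mul_le_mul_of_nonneg_right hln (sum_nonneg fun _ _ => sq_nonneg _))
  rw [← sum_congr rfl fun x _ => posPart_sq_add_negPart_sq (v x), sum_add_distrib]
  exact mul_add_le_of_sq_le_mul (Nat.cast_nonneg k) ((Nat.cast_nonneg l).trans hln) hm hc (hkc k)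
    (sum_nonneg fun _ _ => sq_nonneg _) (sum_nonneg fun _ _ => sq_nonneg _)
    (sq_sum_le_card_support_mul_sum_sq _) hq

end Sums

namespace IsUltrametric

variable {V : Type*} {d : V → V → ℝ}

theorem exists_ssubset_cross_eq [DecidableEq V] (hd : IsUltrametric d) {s : Finset V}
    (hs : s.Nontrivial) : ∃ A ⊂ s, A.Nonempty ∧ ∃ c, ∀ x ∈ A, ∀ y ∈ s \ A, d x y = c := by
  obtain ⟨⟨x₀, y₀⟩, h₀, hmax⟩ :=
    (s ×ˢ s).exists_max_image (fun p => d p.1 p.2) (hs.nonempty.product hs.nonempty)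
  obtain ⟨hx₀, hy₀⟩ := mem_product.1 h₀
  set r := d x₀ y₀
  have hle : ∀ x ∈ s, ∀ y ∈ s, d x y ≤ r := fun x hx y hy =>
    hmax (x, y) (mem_product.2 ⟨hx, hy⟩)
  have hr : 0 < r := by
    obtain ⟨x, hx, y, hy, hxy⟩ := hs
    exact (hd.pos x y hxy).trans_le (hle x hx y hy)
  refine ⟨s.filter (d · x₀ < r), filter_ssubset.2 ⟨y₀, hy₀, by simp [r, hd.symm]⟩,
    ⟨x₀, by simpa [hd.self] using ⟨hx₀, hr⟩⟩, r, fun x hx y hy => ?_⟩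
  simp only [mem_sdiff, mem_filter, not_and, not_lt] at hx hy
  have hyx₀ : r ≤ d y x₀ := hy.2 hy.1
  refine (hle x hx.1 y hy.1).antisymm ?_
  rw [hd.symm]
  simpa [hx.2.not_ge] using hyx₀.trans (hd.le_max y x x₀)

theorem sum_sum_mul_ge (hd : IsUltrametric d) {m M : ℝ}
    (hm : ∀ x y, x ≠ y → m ≤ d x y) (hM : ∀ x y, x ≠ y → d x y ≤ M) (v : V → ℝ) (s : Finset V) :
    m * ((∑ x ∈ s, v x) ^ 2 - ∑ x ∈ s, v x ^ 2) +
        (M - m) * ((∑ x ∈ s, v x) ^ 2 - (∑ x ∈ s, |v x|) ^ 2) / 2 ≤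
      ∑ x ∈ s, ∑ y ∈ s, d x y * v x * v y := by
  classical
  induction s using Finset.strongInduction with | H s ih =>
  rcases s.eq_empty_or_nonempty with rfl | hne
  · simp
  rcases hne.exists_eq_singleton_or_nontrivial with ⟨a, rfl⟩ | hs
  · simp [hd.self]
  obtain ⟨A, hAs, ⟨x, hx⟩, c, hc⟩ := hd.exists_ssubset_cross_eq hs
  obtain ⟨y, hy⟩ : (s \ A).Nonempty := sdiff_nonempty.2 hAs.not_subset
  have hxy : x ≠ y := fun h => (mem_sdiff.1 hy).2 (h ▸ hx)
  have habs : |(∑ x ∈ A, v x) * ∑ y ∈ s \ A, v y| ≤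
      (∑ x ∈ A, |v x|) * ∑ y ∈ s \ A, |v y| := by
    rw [abs_mul]
    exact mul_le_mul (abs_sum_le_sum_abs _ _) (abs_sum_le_sum_abs _ _) (abs_nonneg _)
      (sum_nonneg fun _ _ => abs_nonneg _)
  have hcross :=
    sub_mul_sub_le_two_mul (hc x hx y hy ▸ hm x y hxy) (hc x hx y hy ▸ hM x y hxy) habs
  have ihA := ih A hAs
  have ihB := ih (s \ A) (sdiff_ssubset hAs.subset ⟨x, hx⟩)
  rw [sum_sum_mul_eq_add_of_cross_eq hd.symm v hAs.subset hc]
  simp only [← sum_sdiff hAs.subset (f := v), ← sum_sdiff hAs.subset (f := fun x => v x ^ 2),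
    ← sum_sdiff hAs.subset (f := fun x => |v x|)]
  linear_combination ihA + ihB + hcross

variable [Fintype V]

theorem sum_sum_mul_ge_posPart_negPart (hd : IsUltrametric d) {m M : ℝ}
    (hm : ∀ x y, x ≠ y → m ≤ d x y) (hM : ∀ x y, x ≠ y → d x y ≤ M) (v : V → ℝ) :
    m * ((∑ x, (v x)⁺) ^ 2 + (∑ x, (v x)⁻) ^ 2) - 2 * M * (∑ x, (v x)⁺) * (∑ x, (v x)⁻) -
        m * ∑ x, v x ^ 2 ≤ ∑ x, ∑ y, d x y * v x * v y := by
  have h := hd.sum_sum_mul_ge hm hM v univ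
  rw [← sum_congr rfl fun x _ => posPart_sub_negPart (v x),
    ← sum_congr rfl fun x _ => posPart_add_negPart (v x), sum_sub_distrib, sum_add_distrib] at h
  linarith

theorem le_eigenvalue (hd : IsUltrametric d) {m M : ℝ} (hm0 : 0 ≤ m) (hmM : m ≤ M)
    (hm : ∀ x y, x ≠ y → m ≤ d x y) (hM : ∀ x y, x ≠ y → d x y ≤ M) (K : ℝ)
    (hK : ∀ k : ℕ, (k : ℝ) * (Fintype.card V - k) ≤ K) {μ : ℝ} {v : V → ℝ} (hv : v ≠ 0)
    (hμ : (Matrix.of d).mulVec v = μ • v) :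
    (Fintype.card V * m - √((Fintype.card V : ℝ) ^ 2 * m ^ 2 + 4 * K * (M ^ 2 - m ^ 2))) / 2 - m
      ≤ μ := by
  set n : ℝ := (Fintype.card V : ℝ)
  set c := (n * m - √(n ^ 2 * m ^ 2 + 4 * K * (M ^ 2 - m ^ 2))) / 2
  have hmM2 : m ^ 2 ≤ M ^ 2 := pow_le_pow_left₀ hm0 hmM 2
  have harg : (n * m) ^ 2 ≤ n ^ 2 * m ^ 2 + 4 * K * (M ^ 2 - m ^ 2) := by
    nlinarith [mul_nonneg (by simpa using hK 0 : 0 ≤ K) (sub_nonneg.2 hmM2)]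
  have hc0 : c ≤ 0 := by
    have := (le_abs_self (n * m)).trans (Real.abs_le_sqrt harg)
    simp only [c]
    linarith
  have hc : c ^ 2 - n * m * c = K * (M ^ 2 - m ^ 2) := by
    simp only [c]
    linear_combination Real.sq_sqrt ((sq_nonneg _).trans harg) / 4
  have hlower := mul_sum_sq_le_posPart_negPart hm0 hc0
    (fun k => mul_sq_le_of_sq_sub_eq hmM2 (hK k) hc) v
  have hupper := hd.sum_sum_mul_ge_posPart_negPart hm hM v
  rw [sum_sum_mul_eq_of_mulVec_eq hμ] at hupper
  refine le_of_mul_le_mul_right ?_ (sum_sq_pos_of_ne_zero hv)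
  linarith

end IsUltrametric

theorem stmt_14_general {V : Type*} [Fintype V]
    (d : V → V → ℝ) (hsymm : ∀ x y : V, d x y = d y x)
    (hzero : ∀ x y : V, d x y = 0 ↔ x = y) (hnn : ∀ x y : V, 0 ≤ d x y)
    (hstrong : ∀ x y z : V, d x z ≤ max (d x y) (d y z))
    (m M : ℝ)
    (hm : IsLeast {t | ∃ x y : V, x ≠ y ∧ d x y = t} m)
    (hM : IsGreatest {t | ∃ x y : V, x ≠ y ∧ d x y = t} M) :
    ∀ (μ : ℝ) (v : V → ℝ), v ≠ 0 → (Matrix.of d).mulVec v = μ • v →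
      (Even (Fintype.card V) → (Fintype.card V : ℝ) * (m - M) / 2 - m ≤ μ) ∧
      (Odd (Fintype.card V) →
        ((Fintype.card V : ℝ) * m -
          Real.sqrt (m ^ 2 + ((Fintype.card V : ℝ) ^ 2 - 1) * M ^ 2)) / 2 - m ≤ μ) := by
  intro μ v hv hμ
  have hd : IsUltrametric d := ⟨hsymm, fun x => (hzero x x).2 rfl,
    fun x y hxy => (hnn x y).lt_of_ne' (mt (hzero x y).1 hxy), hstrong⟩
  have hm0 : 0 ≤ m := by
    obtain ⟨x, y, -, rfl⟩ := hm.1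
    exact hnn x y
  have hmM : m ≤ M := hm.2 hM.1
  have hbound := hd.le_eigenvalue hm0 hmM (fun x y hxy => hm.2 ⟨x, y, hxy, rfl⟩)
    (fun x y hxy => hM.2 ⟨x, y, hxy, rfl⟩)
  set n : ℝ := (Fintype.card V : ℝ)
  refine ⟨fun _ => ?_, fun hodd => ?_⟩
  · have h := hbound (n ^ 2 / 4) (fun k => by nlinarith [sq_nonneg (n - 2 * k)]) hv hμ
    rw [show n ^ 2 * m ^ 2 + 4 * (n ^ 2 / 4) * (M ^ 2 - m ^ 2) = (n * M) ^ 2 by ring,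
      Real.sqrt_sq (mul_nonneg (Nat.cast_nonneg _) (hm0.trans hmM))] at h
    linarith
  · have h := hbound ((n ^ 2 - 1) / 4) (mul_sub_le_of_odd hodd) hv hμ
    rwa [show n ^ 2 * m ^ 2 + 4 * ((n ^ 2 - 1) / 4) * (M ^ 2 - m ^ 2) =
      m ^ 2 + (n ^ 2 - 1) * M ^ 2 by ring] at h

/-- Lower bound on the smallest eigenvalue of an ultrametric distance matrix in
terms of the minimum and maximum distances m and M and n = |V|. -/
theorem stmt_14 {V : Type*} [Fintype V] [DecidableEq V] (hcard : 1 < Fintype.card V)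
    (d : V → V → ℝ) (hsymm : ∀ x y : V, d x y = d y x)
    (hzero : ∀ x y : V, d x y = 0 ↔ x = y) (hnn : ∀ x y : V, 0 ≤ d x y)
    (hstrong : ∀ x y z : V, d x z ≤ max (d x y) (d y z))
    (m M : ℝ)
    (hm : IsLeast {t | ∃ x y : V, x ≠ y ∧ d x y = t} m)
    (hM : IsGreatest {t | ∃ x y : V, x ≠ y ∧ d x y = t} M) :
    ∀ (μ : ℝ) (v : V → ℝ), v ≠ 0 → (Matrix.of d).mulVec v = μ • v →
      (Even (Fintype.card V) → (Fintype.card V : ℝ) * (m - M) / 2 - m ≤ μ) ∧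
      (Odd (Fintype.card V) →
        ((Fintype.card V : ℝ) * m -
          Real.sqrt (m ^ 2 + ((Fintype.card V : ℝ) ^ 2 - 1) * M ^ 2)) / 2 - m ≤ μ) :=
  stmt_14_general d hsymm hzero hnn hstrong m M hm hM
end

section
/- The 6×6 symmetric matrix A with rows (4,4,4,4,3,3), (4,4,4,4,3,3), (4,4,4,3,3,3), (4,4,3,4,3,3), (3,3,3,3,3,3), (3,3,3,3,3,3) is not positive semidefinite. -/
open Matrix

/-- The concrete 6×6 matrix P(G)+D(G) from the counterexample is not positive
semidefinite. -/
theorem stmt_17 :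
    ¬ (∀ x : Fin 6 → ℝ, 0 ≤ x ⬝ᵥ (!![4,4,4,4,3,3;
                                      4,4,4,4,3,3;
                                      4,4,4,3,3,3;
                                      4,4,3,4,3,3;
                                      3,3,3,3,3,3;
                                      3,3,3,3,3,3] : Matrix (Fin 6) (Fin 6) ℝ).mulVec x) := by
  intro h
  have := h ![2,0,-1,-1,0,0]
  have e1 : (![(2:ℝ),0,-1,-1,0,0]) 5 = 0 := rfl
  simp [mulVec, dotProduct, Fin.sum_univ_six, e1] at this
  linarith
end

section
/- Let m ≤ M be nonnegative reals and n ≥ 2. For the n×n matrix D with zero diagonal whose off-diagonal entries are m within each of two classes V₁, V₂ (with ||V₁|−|V₂|| ≤ 1) and M between the classes: D arises from an ultrametric if 0 < m ≤ M, and the smallest eigenvalue of D equals n(m−M)/2 − m if n is even and (n·m − √(m² + (n²−1)M²))/2 − m if n is odd. -/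
lemma card_filter_lt' (n k1 : ℕ) (hk : k1 ≤ n) :
    ((Finset.univ.filter fun j : Fin n => (j : ℕ) < k1).card) = k1 := by
  have h : (Finset.univ.filter fun j : Fin n => (j : ℕ) < k1).image Fin.val
      = Finset.range k1 := by
    ext a
    simp only [Finset.mem_image, Finset.mem_filter, Finset.mem_univ, true_and,
      Finset.mem_range]
    constructor
    · rintro ⟨j, hj, rfl⟩; exact hj
    · intro ha; exact ⟨⟨a, lt_of_lt_of_le ha hk⟩, ha, rfl⟩
  have := congrArg Finset.card h
  rwa [Finset.card_image_of_injective _ Fin.val_injective, Finset.card_range] at this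

lemma mulVec_formula (n k1 : ℕ) (m M : ℝ) (D : Matrix (Fin n) (Fin n) ℝ)
    (hD : ∀ i j : Fin n, D i j = if i = j then 0
      else if ((i : ℕ) < k1 ↔ (j : ℕ) < k1) then m else M)
    (v : Fin n → ℝ) (i : Fin n) :
    D.mulVec v i =
      (if (i : ℕ) < k1
        then m * (∑ j ∈ Finset.univ.filter fun j : Fin n => (j : ℕ) < k1, v j)
          + M * (∑ j ∈ Finset.univ.filter fun j : Fin n => ¬ (j : ℕ) < k1, v j)
        else M * (∑ j ∈ Finset.univ.filter fun j : Fin n => (j : ℕ) < k1, v j)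
          + m * (∑ j ∈ Finset.univ.filter fun j : Fin n => ¬ (j : ℕ) < k1, v j))
      - m * v i := by
  classical
  set T := Finset.univ.filter fun j : Fin n => (j : ℕ) < k1 with hT
  set T' := Finset.univ.filter fun j : Fin n => ¬ (j : ℕ) < k1 with hT'
  have hsplit : D.mulVec v i = (∑ j ∈ T, D i j * v j) + ∑ j ∈ T', D i j * v j := by
    simp only [Matrix.mulVec, dotProduct]
    exact (Finset.sum_filter_add_sum_filter_not Finset.univ _ _).symm
  by_cases hi : (i : ℕ) < k1
  · have hiT : i ∈ T := by simp [hT, hi]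
    have h1 : ∑ j ∈ T, D i j * v j = m * (∑ j ∈ T, v j) - m * v i := by
      rw [← Finset.sum_erase_add T _ hiT, hD i i, if_pos rfl, zero_mul, add_zero]
      rw [← Finset.sum_erase_add T v hiT]
      have : ∀ j ∈ T.erase i, D i j * v j = m * v j := by
        intro j hj
        have hji : j ≠ i := Finset.ne_of_mem_erase hj
        have hjT : j ∈ T := Finset.mem_of_mem_erase hj
        have hjk : (j : ℕ) < k1 := by simpa [hT] using hjT
        rw [hD i j, if_neg (fun h => hji h.symm), if_pos (by simp [hi, hjk])]
      rw [Finset.sum_congr rfl this, ← Finset.mul_sum]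
      ring
    have h2 : ∑ j ∈ T', D i j * v j = M * ∑ j ∈ T', v j := by
      rw [Finset.mul_sum]
      refine Finset.sum_congr rfl fun j hj => ?_
      have hjk : ¬ (j : ℕ) < k1 := by have := hj; simp only [hT', Finset.mem_filter, Finset.mem_univ, true_and] at this; exact this
      have hji : i ≠ j := by intro h; exact hjk (h ▸ hi)
      rw [hD i j, if_neg hji, if_neg (by simp [hi, hjk])]
    rw [hsplit, h1, h2, if_pos hi]; ring
  · have hiT : i ∈ T' := by simp only [hT', Finset.mem_filter, Finset.mem_univ, true_and]; exact hi
    have h1 : ∑ j ∈ T, D i j * v j = M * ∑ j ∈ T, v j := by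
      rw [Finset.mul_sum]
      refine Finset.sum_congr rfl fun j hj => ?_
      have hjk : (j : ℕ) < k1 := by simpa [hT] using hj
      have hji : i ≠ j := by intro h; exact hi (h ▸ hjk)
      rw [hD i j, if_neg hji, if_neg (by simp [hi, hjk])]
    have h2 : ∑ j ∈ T', D i j * v j = m * (∑ j ∈ T', v j) - m * v i := by
      rw [← Finset.sum_erase_add T' _ hiT, hD i i, if_pos rfl, zero_mul, add_zero]
      rw [← Finset.sum_erase_add T' v hiT]
      have : ∀ j ∈ T'.erase i, D i j * v j = m * v j := by
        intro j hj
        have hji : j ≠ i := Finset.ne_of_mem_erase hj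
        have hjT : j ∈ T' := Finset.mem_of_mem_erase hj
        have hjk : ¬ (j : ℕ) < k1 := by have := hjT; simp only [hT', Finset.mem_filter, Finset.mem_univ, true_and] at this; exact this
        rw [hD i j, if_neg (fun h => hji h.symm), if_pos (by simp [hi, hjk])]
      rw [Finset.sum_congr rfl this, ← Finset.mul_sum]
      ring
    rw [hsplit, h1, h2, if_neg hi]; ring

set_option maxHeartbeats 2000000 in
lemma spec_least (n : ℕ) (hn : 2 ≤ n) (m M R : ℝ) (hm0 : 0 ≤ m) (hmM : m ≤ M)
    (hR0 : 0 ≤ R) (D : Matrix (Fin n) (Fin n) ℝ)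
    (hD : ∀ i j : Fin n, D i j = if i = j then 0
      else if ((i : ℕ) < (n + 1) / 2 ↔ (j : ℕ) < (n + 1) / 2) then m else M)
    (hR : R ^ 2 = (m * n) ^ 2
      - 4 * (((n + 1) / 2 : ℕ) : ℝ) * ((n / 2 : ℕ) : ℝ) * (m ^ 2 - M ^ 2)) :
    IsLeast {μ : ℝ | ∃ v : Fin n → ℝ, v ≠ 0 ∧ D.mulVec v = μ • v}
      ((m * n - R) / 2 - m) := by
  classical
  set k1 : ℕ := (n + 1) / 2 with hk1def
  set T := Finset.univ.filter fun j : Fin n => (j : ℕ) < k1 with hTdef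
  set T' := Finset.univ.filter fun j : Fin n => ¬ (j : ℕ) < k1 with hT'def
  have hk1n : k1 ≤ n := by omega
  have hcT : T.card = k1 := card_filter_lt' n k1 hk1n
  have hcT' : T'.card = n / 2 := by
    have h1 : T' = Finset.univ \ T := by
      rw [hTdef, hT'def, Finset.filter_not]
    rw [h1, Finset.card_sdiff_of_subset (Finset.filter_subset _ _), hcT, Finset.card_univ,
      Fintype.card_fin]
    omega
  set n1 : ℝ := (k1 : ℝ) with hn1def
  set n2 : ℝ := ((n / 2 : ℕ) : ℝ) with hn2def
  have hn1 : (1 : ℝ) ≤ n1 := by rw [hn1def]; exact_mod_cast by omega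
  have hn2 : (1 : ℝ) ≤ n2 := by rw [hn2def]; exact_mod_cast by omega
  have hsum : n1 + n2 = (n : ℝ) := by
    rw [hn1def, hn2def]; exact_mod_cast by omega
  have hM0 : 0 ≤ M := le_trans hm0 hmM
  have hmnR : m * n ≤ R := by
    have hm2 : m ^ 2 ≤ M ^ 2 := by nlinarith
    have hnn : (0:ℝ) ≤ n1 * n2 := by nlinarith
    have h1 : (m * n) ^ 2 ≤ R ^ 2 := by nlinarith [mul_nonneg hnn (sub_nonneg.mpr hm2)]
    nlinarith [mul_nonneg hm0 (Nat.cast_nonneg n)]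
  constructor
  · -- membership
    by_cases hM : M = 0
    · have hm : m = 0 := le_antisymm (hM ▸ hmM) hm0
      have hRz : R = 0 := by
        have : R ^ 2 = 0 := by rw [hR, hm, hM]; ring
        nlinarith
      refine ⟨fun _ => 1, ?_, ?_⟩
      · intro h
        have := congrFun h ⟨0, by omega⟩
        simp at this
      · funext i
        rw [mulVec_formula n k1 m M D hD]
        rw [hm, hM, hRz]
        simp
    · have hMpos : 0 < M := lt_of_le_of_ne hM0 (Ne.symm hM)
      set c : ℝ := (m * n - R) / 2 with hcdef
      set a : ℝ := M * n2 with hadef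
      set b : ℝ := c - m * n1 with hbdef
      have hkey : (c - m * n1) * (c - m * n2) = M ^ 2 * n1 * n2 := by
        have hc2 : c ^ 2 - (m * n) * c = (R ^ 2 - (m * n) ^ 2) / 4 := by
          rw [hcdef]; ring
        linear_combination hc2 + hR / 4 - m * c * hsum
      refine ⟨fun i => if (i : ℕ) < k1 then a else b, ?_, ?_⟩
      · intro h
        have h0 : (0 : ℕ) < k1 := by omega
        have := congrFun h ⟨0, by omega⟩
        simp only [Pi.zero_apply] at this
        rw [if_pos h0] at this
        have : a ≠ 0 := by positivity
        simp_all
      · funext i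
        rw [mulVec_formula n k1 m M D hD]
        have hS1 : ∑ j ∈ T, (if (j : ℕ) < k1 then a else b) = n1 * a := by
          rw [Finset.sum_congr rfl (fun j hj => if_pos (by
            simpa [hTdef] using hj)), Finset.sum_const, hcT, nsmul_eq_mul, hn1def]
        have hS2 : ∑ j ∈ T', (if (j : ℕ) < k1 then a else b) = n2 * b := by
          rw [Finset.sum_congr rfl (fun j hj => if_neg (by
            have := hj
            simp only [hT'def, Finset.mem_filter, Finset.mem_univ, true_and] at this
            exact this)), Finset.sum_const, hcT', nsmul_eq_mul, hn2def]
        rw [← hTdef, ← hT'def, hS1, hS2]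
        simp only [Pi.smul_apply, smul_eq_mul]
        by_cases hi : (i : ℕ) < k1
        · rw [if_pos hi, if_pos hi, hadef, hbdef]; ring
        · rw [if_neg hi, if_neg hi]
          have : M * (n1 * a) + m * (n2 * b) = c * b := by
            rw [hadef, hbdef]
            linear_combination -hkey
          linarith [this]
  · -- lower bound
    rintro μ ⟨v, hv, heig⟩
    set S1 := ∑ j ∈ T, v j with hS1def
    set S2 := ∑ j ∈ T', v j with hS2def
    have h1 : ∀ i : Fin n, (i : ℕ) < k1 → m * S1 + M * S2 = (μ + m) * v i := by
      intro i hi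
      have he := congrFun heig i
      rw [mulVec_formula n k1 m M D hD, ← hTdef, ← hT'def, ← hS1def, ← hS2def,
        if_pos hi] at he
      simp only [Pi.smul_apply, smul_eq_mul] at he
      linarith
    have h2 : ∀ i : Fin n, ¬ (i : ℕ) < k1 → M * S1 + m * S2 = (μ + m) * v i := by
      intro i hi
      have he := congrFun heig i
      rw [mulVec_formula n k1 m M D hD, ← hTdef, ← hT'def, ← hS1def, ← hS2def,
        if_neg hi] at he
      simp only [Pi.smul_apply, smul_eq_mul] at he
      linarith
    by_cases hc' : μ + m = 0
    · have : μ = -m := by linarith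
      rw [this]
      have : m * n - R ≤ 0 := by linarith
      linarith
    · set c' : ℝ := μ + m with hc'def
      have hS1eq : c' * S1 = n1 * (m * S1 + M * S2) := by
        rw [hS1def, Finset.mul_sum]
        rw [Finset.sum_congr rfl (fun j hj => (h1 j (by simpa [hTdef] using hj)).symm)]
        rw [Finset.sum_const, hcT, nsmul_eq_mul, hn1def]
      have hS2eq : c' * S2 = n2 * (M * S1 + m * S2) := by
        rw [hS2def, Finset.mul_sum]
        rw [Finset.sum_congr rfl (fun j hj => (h2 j (by
          have := hj
          simp only [hT'def, Finset.mem_filter, Finset.mem_univ, true_and] at this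
          exact this)).symm)]
        rw [Finset.sum_const, hcT', nsmul_eq_mul, hn2def]
      have hSne : ¬ (S1 = 0 ∧ S2 = 0) := by
        rintro ⟨hz1, hz2⟩
        apply hv
        funext i
        by_cases hi : (i : ℕ) < k1
        · have := h1 i hi
          rw [hz1, hz2] at this
          have h0 : c' * v i = 0 := by linarith
          simpa using (mul_eq_zero.mp h0).resolve_left hc'
        · have := h2 i hi
          rw [hz1, hz2] at this
          have h0 : c' * v i = 0 := by linarith
          simpa using (mul_eq_zero.mp h0).resolve_left hc'
      have eq1 : (c' - m * n1) * S1 = M * n1 * S2 := by linarith [hS1eq]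
      have eq2 : (c' - m * n2) * S2 = M * n2 * S1 := by linarith [hS2eq]
      have hE : (c' - m * n1) * (c' - m * n2) = M ^ 2 * n1 * n2 := by
        by_cases hz1 : S1 = 0
        · have hz2 : S2 ≠ 0 := fun h => hSne ⟨hz1, h⟩
          have h3 : M * n1 * S2 = 0 := by
            rw [hz1] at eq1; linear_combination -eq1
          have hMz : M = 0 := by
            rcases mul_eq_zero.mp h3 with h | h
            · rcases mul_eq_zero.mp h with h | h
              · exact h
              · exfalso; linarith
            · exact absurd h hz2
          have hmz : m = 0 := le_antisymm (hMz ▸ hmM) hm0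
          have h4 : (c' - m * n2) * S2 = 0 := by
            rw [hz1] at eq2; linear_combination eq2
          have h5 : c' - m * n2 = 0 := (mul_eq_zero.mp h4).resolve_right hz2
          have hcz : c' = 0 := by rw [hmz] at h5; linarith
          rw [hMz, hmz, hcz]; ring
        · by_cases hz2 : S2 = 0
          · have h3 : M * n2 * S1 = 0 := by
              rw [hz2] at eq2; linear_combination -eq2
            have hMz : M = 0 := by
              rcases mul_eq_zero.mp h3 with h | h
              · rcases mul_eq_zero.mp h with h | h
                · exact h
                · exfalso; linarith
              · exact absurd h hz1
            have hmz : m = 0 := le_antisymm (hMz ▸ hmM) hm0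
            have h4 : (c' - m * n1) * S1 = 0 := by
              rw [hz2] at eq1; linear_combination eq1
            have h5 : c' - m * n1 = 0 := (mul_eq_zero.mp h4).resolve_right hz1
            have hcz : c' = 0 := by rw [hmz] at h5; linarith
            rw [hMz, hmz, hcz]; ring
          · have h12 : ((c' - m * n1) * (c' - m * n2)) * (S1 * S2)
                = (M ^ 2 * n1 * n2) * (S1 * S2) := by
              linear_combination (c' - m * n2) * S2 * eq1 + M * n1 * S2 * eq2
            exact mul_right_cancel₀ (mul_ne_zero hz1 hz2) h12
      have hsq : (2 * c' - m * n) ^ 2 = R ^ 2 := by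
        linear_combination 4 * hE - hR + 4 * m * c' * hsum
      nlinarith [hsq, hR0, sq_nonneg (2 * c' - m * n + R)]

/-- The balanced two-class zero-diagonal matrix D (distance m within classes and
M between them) arises from an ultrametric when 0 < m ≤ M, and its smallest
eigenvalue is n(m−M)/2 − m for even n and (n·m − √(m² + (n²−1)M²))/2 − m for
odd n. -/
theorem stmt_19 (n : ℕ) (hn : 2 ≤ n) (m M : ℝ) (hm0 : 0 ≤ m) (hmM : m ≤ M)
    (D : Matrix (Fin n) (Fin n) ℝ)
    (hD : ∀ i j : Fin n, D i j = if i = j then 0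
      else if ((i : ℕ) < (n + 1) / 2 ↔ (j : ℕ) < (n + 1) / 2) then m else M) :
    (0 < m →
      (∀ x y : Fin n, D x y = D y x) ∧ (∀ x y : Fin n, D x y = 0 ↔ x = y) ∧
      (∀ x y z : Fin n, D x z ≤ max (D x y) (D y z))) ∧
    (Even n → IsLeast {μ : ℝ | ∃ v : Fin n → ℝ, v ≠ 0 ∧ D.mulVec v = μ • v}
      ((n : ℝ) * (m - M) / 2 - m)) ∧
    (Odd n → IsLeast {μ : ℝ | ∃ v : Fin n → ℝ, v ≠ 0 ∧ D.mulVec v = μ • v}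
      (((n : ℝ) * m - Real.sqrt (m ^ 2 + ((n : ℝ) ^ 2 - 1) * M ^ 2)) / 2 - m)) := by
  have hM0 : 0 ≤ M := le_trans hm0 hmM
  refine ⟨?_, ?_, ?_⟩
  · intro hm
    have hMpos : 0 < M := lt_of_lt_of_le hm hmM
    refine ⟨?_, ?_, ?_⟩
    · intro x y
      rw [hD x y, hD y x]
      by_cases hxy : x = y
      · simp [hxy]
      · rw [if_neg hxy, if_neg (Ne.symm hxy)]
        by_cases hc : ((x : ℕ) < (n + 1) / 2 ↔ (y : ℕ) < (n + 1) / 2)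
        · rw [if_pos hc, if_pos hc.symm]
        · rw [if_neg hc, if_neg (fun h => hc h.symm)]
    · intro x y
      rw [hD x y]
      by_cases hxy : x = y
      · simp [hxy]
      · rw [if_neg hxy]
        constructor
        · intro h0
          by_cases hc : ((x : ℕ) < (n + 1) / 2 ↔ (y : ℕ) < (n + 1) / 2)
          · rw [if_pos hc] at h0; exact absurd h0 (ne_of_gt hm)
          · rw [if_neg hc] at h0; exact absurd h0 (ne_of_gt hMpos)
        · intro h; exact absurd h hxy
    · intro x y z
      have hval : ∀ a b : Fin n, a ≠ b → ((a : ℕ) < (n + 1) / 2 ↔ (b : ℕ) < (n + 1) / 2)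
          → D a b = m := fun a b hab hc => by rw [hD, if_neg hab, if_pos hc]
      have hvalM : ∀ a b : Fin n, a ≠ b → ¬((a : ℕ) < (n + 1) / 2 ↔ (b : ℕ) < (n + 1) / 2)
          → D a b = M := fun a b hab hc => by rw [hD, if_neg hab, if_neg hc]
      have hnn : ∀ a b : Fin n, 0 ≤ D a b := fun a b => by
        rw [hD]; split_ifs <;> linarith
      have hmle : ∀ a b : Fin n, a ≠ b → m ≤ D a b := fun a b hab => by
        rw [hD, if_neg hab]; split_ifs <;> linarith
      by_cases hxz : x = z
      · subst hxz
        rw [hD, if_pos rfl]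
        exact le_trans (hnn x y) (le_max_left _ _)
      · by_cases hc : ((x : ℕ) < (n + 1) / 2 ↔ (z : ℕ) < (n + 1) / 2)
        · rw [hval x z hxz hc]
          by_cases hyx : y = x
          · subst hyx
            rw [hval y z hxz hc]
            exact le_max_right _ _
          · exact le_trans (hmle x y (fun h => hyx h.symm)) (le_max_left _ _)
        · rw [hvalM x z hxz hc]
          by_cases hyx : y = x
          · subst hyx
            rw [hvalM y z hxz hc]
            exact le_max_right _ _
          · by_cases hyz : y = z
            · subst hyz
              rw [hvalM x y hxz hc]
              exact le_max_left _ _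
            · by_cases hcy : ((x : ℕ) < (n + 1) / 2 ↔ (y : ℕ) < (n + 1) / 2)
              · have : ¬((y : ℕ) < (n + 1) / 2 ↔ (z : ℕ) < (n + 1) / 2) := by tauto
                rw [hvalM y z hyz this]
                exact le_max_right _ _
              · rw [hvalM x y (fun h => hyx h.symm) hcy]
                exact le_max_left _ _
  · intro he
    have hnat : 4 * ((n + 1) / 2) * (n / 2) = n * n := by
      obtain ⟨k, hk⟩ := he
      subst hk
      have h1 : (k + k + 1) / 2 = k := by omega
      have h2 : (k + k) / 2 = k := by omega
      rw [h1, h2]; ring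
    have hcast : 4 * (((n + 1) / 2 : ℕ) : ℝ) * ((n / 2 : ℕ) : ℝ) = (n : ℝ) * n := by
      exact_mod_cast congrArg (Nat.cast : ℕ → ℝ) hnat
    have hR0 : (0 : ℝ) ≤ (n : ℝ) * M := by positivity
    have hR : ((n : ℝ) * M) ^ 2 = (m * n) ^ 2
        - 4 * (((n + 1) / 2 : ℕ) : ℝ) * ((n / 2 : ℕ) : ℝ) * (m ^ 2 - M ^ 2) := by
      linear_combination (m ^ 2 - M ^ 2) * hcast
    have h := spec_least n hn m M ((n : ℝ) * M) hm0 hmM hR0 D hD hR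
    have heq : (m * (n : ℝ) - (n : ℝ) * M) / 2 - m = (n : ℝ) * (m - M) / 2 - m := by ring
    rwa [heq] at h
  · intro ho
    set R : ℝ := Real.sqrt (m ^ 2 + ((n : ℝ) ^ 2 - 1) * M ^ 2) with hRdef
    have harg : (0 : ℝ) ≤ m ^ 2 + ((n : ℝ) ^ 2 - 1) * M ^ 2 := by
      have h2 : (2 : ℝ) ≤ (n : ℝ) := by exact_mod_cast hn
      have h3 : (0 : ℝ) ≤ ((n : ℝ) ^ 2 - 1) * M ^ 2 :=
        mul_nonneg (by nlinarith) (sq_nonneg M)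
      nlinarith [sq_nonneg m]
    have hR0 : 0 ≤ R := Real.sqrt_nonneg _
    have hRsq : R ^ 2 = m ^ 2 + ((n : ℝ) ^ 2 - 1) * M ^ 2 := Real.sq_sqrt harg
    have hnat : 4 * ((n + 1) / 2) * (n / 2) + 1 = n * n := by
      obtain ⟨k, hk⟩ := ho
      subst hk
      have h1 : (2 * k + 1 + 1) / 2 = k + 1 := by omega
      have h2 : (2 * k + 1) / 2 = k := by omega
      rw [h1, h2]; ring
    have hcast : 4 * (((n + 1) / 2 : ℕ) : ℝ) * ((n / 2 : ℕ) : ℝ) + 1 = (n : ℝ) * n := by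
      exact_mod_cast congrArg (Nat.cast : ℕ → ℝ) hnat
    have hR : R ^ 2 = (m * n) ^ 2
        - 4 * (((n + 1) / 2 : ℕ) : ℝ) * ((n / 2 : ℕ) : ℝ) * (m ^ 2 - M ^ 2) := by
      rw [hRsq]
      linear_combination (m ^ 2 - M ^ 2) * hcast
    have h := spec_least n hn m M R hm0 hmM hR0 D hD hR
    have heq : (m * (n : ℝ) - R) / 2 - m
        = ((n : ℝ) * m - Real.sqrt (m ^ 2 + ((n : ℝ) ^ 2 - 1) * M ^ 2)) / 2 - m := by
      rw [← hRdef]; ring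
    rwa [heq] at h
end
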